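/- arXiv:2510.11831 — 7 statements merged into one kernel-verified Lean document; each statement's English description precedes it below -/
import Mathlib

section
/- (Duhamel identity) Let E be a complete normed algebra over ℝ (for instance the algebra of bounded linear operators on a Banach space), let A, B ∈ E, and let t ∈ ℝ. Then exp(t·(A+B)) = exp(t·A) + ∫_0^t exp((t−s)·(A+B)) · B · exp(s·A) ds, where the integral is the interval Bochner integral of the continuous E-valued integrand and exp is the exponential function in E. -/
/-!
For fixed `t`, the function `s ↦ exp((t - s)•C) * exp(s•A)` goes from `exp(t•C)` at `s = 0`
to `exp(t•A)` at `s = t`, and by the product rule its derivative is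
`exp((t - s)•C) * (A - C) * exp(s•A)`; no commutativity is needed since each factor
commutes with its own generator. Integrate over `[0, t]` and take `C = A + B`.
-/

namespace NormedSpace

variable {E : Type*} [NormedRing E] [NormedAlgebra ℝ E] [CompleteSpace E]

theorem hasDerivAt_exp_smul_sub_mul_exp_smul (A C : E) (t s : ℝ) :
    HasDerivAt (fun u : ℝ => exp ((t - u) • C) * exp (u • A))
      (-(exp ((t - s) • C) * (C - A) * exp (s • A))) s := by
  have hC : HasDerivAt (fun u : ℝ => exp ((t - u) • C)) (-(exp ((t - s) • C) * C)) s := by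
    simpa [Function.comp_def] using
      (hasDerivAt_exp_smul_const C (t - s)).scomp s ((hasDerivAt_id s).const_sub t)
  refine (hC.mul (hasDerivAt_exp_smul_const' A s)).congr_deriv ?_
  simp only [mul_sub, sub_mul, mul_assoc, neg_mul]
  abel

theorem continuous_exp_smul_sub_mul_mul_exp_smul (A B C : E) (t : ℝ) :
    Continuous fun s : ℝ => exp ((t - s) • C) * B * exp (s • A) := by
  have hexp (x : E) : Continuous fun u : ℝ => exp (u • x) :=
    (differentiable_exp_smul_const ℝ x).continuous
  exact (((hexp C).comp (continuous_sub_left t)).mul continuous_const).mul (hexp A)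

theorem exp_smul_eq_exp_smul_add_integral (A C : E) (t : ℝ) :
    exp (t • C) = exp (t • A) + ∫ s in (0 : ℝ)..t, exp ((t - s) • C) * (C - A) * exp (s • A) := by
  have hFTC := intervalIntegral.integral_eq_sub_of_hasDerivAt
    (fun s _ => hasDerivAt_exp_smul_sub_mul_exp_smul A C t s)
    ((continuous_exp_smul_sub_mul_mul_exp_smul A (C - A) C t).neg.intervalIntegrable 0 t)
  simp only [intervalIntegral.integral_neg, sub_self, zero_smul, sub_zero, exp_zero, one_mul,
    mul_one] at hFTC
  rw [neg_eq_iff_eq_neg, neg_sub] at hFTC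
  rw [hFTC]
  abel

end NormedSpace

/-- **Duhamel identity.** In a complete normed algebra `E` over `ℝ`, for
`A, B ∈ E` and `t ∈ ℝ`:
`exp(t(A+B)) = exp(tA) + ∫_0^t exp((t-s)(A+B)) B exp(sA) ds`. -/
theorem stmt_3 {E : Type*} [NormedRing E] [NormedAlgebra ℝ E] [CompleteSpace E]
    (A B : E) (t : ℝ) :
    NormedSpace.exp (t • (A + B)) =
      NormedSpace.exp (t • A) +
        ∫ s in (0 : ℝ)..t,
          NormedSpace.exp ((t - s) • (A + B)) * B * NormedSpace.exp (s • A) := by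
  simpa only [add_sub_cancel_left] using NormedSpace.exp_smul_eq_exp_smul_add_integral A (A + B) t
end

section
/- Let n ≥ 1 be an integer, Δ > 0 a real number, and E : {0,…,n−1} → ℝ a function with E(i+1) − E(i) ≥ Δ for all 0 ≤ i ≤ n−2 (so E is strictly increasing and |E(i) − E(j)| ≥ Δ·|i−j| for all i, j). For any complex n×n matrix X, define the matrix L(X) by L(X)_{ij} = X_{ij}/(E(i) − E(j)) for i ≠ j and L(X)_{ii} = 0. Then ‖L(X)‖ ≤ (π/(√3·Δ))·‖X‖. -/
/-!
`L(X)` is the Hadamard product `A ⊙ X` with `A i j = (E i - E j)⁻¹`. Schur's bound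
`‖A ⊙ X‖ ≤ (max_i ‖A i ·‖₂) ‖X‖` follows from `⟪w, (A ⊙ X) v⟫ = ∑ₖ vₖ ⟪zₖ, X eₖ⟫` with
`zₖ i = conj (A i k) wᵢ` and Cauchy–Schwarz in `k`. The gap condition gives
`|E i - E j| ≥ Δ |i - j|`, so every row satisfies
`∑ⱼ (E i - E j)⁻² ≤ Δ⁻² ∑_{m ∈ ℤ, m ≠ 0} m⁻² = π² / (3 Δ²)`.
-/

open Matrix WithLp

namespace Matrix

variable {𝕜 ι : Type*} [RCLike 𝕜] [Fintype ι]

theorem sum_norm_sq_toLp_star_mul_le (A : Matrix ι ι 𝕜) {C : ℝ}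
    (hA : ∀ i, ∑ j, ‖A i j‖ ^ 2 ≤ C ^ 2) (w : EuclideanSpace 𝕜 ι) :
    ∑ k, ‖(toLp 2 fun i => star (A i k) * w i : EuclideanSpace 𝕜 ι)‖ ^ 2 ≤ C ^ 2 * ‖w‖ ^ 2 := by
  simp only [EuclideanSpace.norm_sq_eq, norm_mul, norm_star, mul_pow]
  rw [Finset.sum_comm, Finset.mul_sum]
  exact Finset.sum_le_sum fun i _ => by
    rw [← Finset.sum_mul]; exact mul_le_mul_of_nonneg_right (hA i) (sq_nonneg _)

variable [DecidableEq ι]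

theorem norm_toLp_col_le_norm_toEuclideanCLM (X : Matrix ι ι 𝕜) (k : ι) :
    ‖(toLp 2 fun i => X i k : EuclideanSpace 𝕜 ι)‖ ≤ ‖toEuclideanCLM (𝕜 := 𝕜) X‖ := by
  have hcol : (toLp 2 fun i => X i k : EuclideanSpace 𝕜 ι) =
      toEuclideanCLM (𝕜 := 𝕜) X (EuclideanSpace.single k 1) := by
    ext i; simp [mulVec, dotProduct]
  simpa [hcol] using (toEuclideanCLM (𝕜 := 𝕜) X).le_opNorm (EuclideanSpace.single k 1)

theorem inner_toEuclideanCLM_hadamard (A X : Matrix ι ι 𝕜) (w v : EuclideanSpace 𝕜 ι) :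
    inner 𝕜 w (toEuclideanCLM (𝕜 := 𝕜) (A ⊙ X) v) =
      ∑ k, v k * inner 𝕜 (toLp 2 fun i => star (A i k) * w i : EuclideanSpace 𝕜 ι)
        (toLp 2 fun i => X i k) := by
  simp only [PiLp.inner_apply, RCLike.inner_apply', ofLp_toEuclideanCLM, mulVec, dotProduct,
    hadamard_apply, Finset.mul_sum, RCLike.star_def, map_mul, RCLike.conj_conj]
  rw [Finset.sum_comm]
  exact Finset.sum_congr rfl fun k _ => Finset.sum_congr rfl fun i _ => by ring

theorem norm_toEuclideanCLM_hadamard_le (A X : Matrix ι ι 𝕜) {C : ℝ} (hC : 0 ≤ C)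
    (hA : ∀ i, ∑ j, ‖A i j‖ ^ 2 ≤ C ^ 2) :
    ‖toEuclideanCLM (𝕜 := 𝕜) (A ⊙ X)‖ ≤ C * ‖toEuclideanCLM (𝕜 := 𝕜) X‖ := by
  set N := ‖toEuclideanCLM (𝕜 := 𝕜) X‖
  refine ContinuousLinearMap.opNorm_le_of_re_inner_le (by positivity) fun v w hv hw => ?_
  set z : ι → EuclideanSpace 𝕜 ι := fun k => toLp 2 fun i => star (A i k) * w i
  have hz : √(∑ k, ‖z k‖ ^ 2) ≤ C := Real.sqrt_le_iff.2
    ⟨hC, by simpa only [hw, one_pow, mul_one] using sum_norm_sq_toLp_star_mul_le A hA w⟩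
  rw [← inner_conj_symm, RCLike.conj_re]
  calc RCLike.re (inner 𝕜 w (toEuclideanCLM (𝕜 := 𝕜) (A ⊙ X) v))
      ≤ ‖∑ k, v k * inner 𝕜 (z k) (toLp 2 fun i => X i k)‖ := by
        rw [← inner_toEuclideanCLM_hadamard]; exact RCLike.re_le_norm _
    _ ≤ ∑ k, ‖v k‖ * ‖z k‖ * N := by
        refine norm_sum_le_of_le _ fun k _ => ?_
        rw [norm_mul, mul_assoc]
        gcongr
        exact (norm_inner_le_norm _ _).trans
          (by gcongr; exact norm_toLp_col_le_norm_toEuclideanCLM X k)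
    _ ≤ √(∑ k, ‖v k‖ ^ 2) * √(∑ k, ‖z k‖ ^ 2) * N := by
        rw [← Finset.sum_mul]; gcongr; exact Real.sum_mul_le_sqrt_mul_sqrt _ _ _
    _ ≤ C * N := by
        rw [← EuclideanSpace.norm_eq, hv, one_mul]; gcongr

end Matrix

open Real

theorem hasSum_int_inv_sq : HasSum (fun m : ℤ => ((m : ℝ) ^ 2)⁻¹) (π ^ 2 / 3) := by
  have hnat : HasSum (fun m : ℕ => ((m : ℝ) ^ 2)⁻¹) (π ^ 2 / 6) := by
    simpa only [one_div] using hasSum_zeta_two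
  have hsucc : HasSum (fun m : ℕ => (((m : ℝ) + 1) ^ 2)⁻¹) (π ^ 2 / 6) := by
    simpa using (hasSum_nat_add_iff' 1).2 hnat
  convert hnat.of_nat_of_neg_add_one (f := fun m : ℤ => ((m : ℝ) ^ 2)⁻¹)
    (by simpa only [Int.cast_neg, Int.cast_add, Int.cast_natCast, Int.cast_one, neg_sq]
      using hsucc) using 1
  ring

theorem Fin.monotone_of_le_succ {α : Type*} [Preorder α] {n : ℕ} {f : Fin n → α}
    (hf : ∀ (i : ℕ) (hi : i + 1 < n), f ⟨i, Nat.lt_of_succ_lt hi⟩ ≤ f ⟨i + 1, hi⟩) :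
    Monotone f := by
  cases n with
  | zero => exact fun i => i.elim0
  | succ n => exact Fin.monotone_iff_le_succ.2 fun i => hf i (by omega)

theorem mul_abs_sub_le_abs_sub_of_gap {n : ℕ} {Δ : ℝ} {E : Fin n → ℝ}
    (hE : ∀ (i : ℕ) (hi : i + 1 < n), Δ ≤ E ⟨i + 1, hi⟩ - E ⟨i, Nat.lt_of_succ_lt hi⟩)
    (i j : Fin n) : Δ * |(i : ℝ) - j| ≤ |E i - E j| := by
  wlog hij : i ≤ j generalizing i j
  · rw [abs_sub_comm, abs_sub_comm (E i)]
    exact this j i (le_of_not_ge hij)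
  have hmono : Monotone fun k : Fin n => E k - Δ * k :=
    Fin.monotone_of_le_succ fun k hk => by push_cast; linarith [hE k hk]
  have hij' : (i : ℝ) ≤ j := by exact_mod_cast hij
  rw [abs_sub_comm, abs_of_nonneg (sub_nonneg.2 hij'), abs_sub_comm]
  linarith [hmono hij, le_abs_self (E j - E i)]

theorem sum_inv_sq_sub_le_of_gap {n : ℕ} {Δ : ℝ} (hΔ : 0 < Δ) {E : Fin n → ℝ}
    (hE : ∀ (i : ℕ) (hi : i + 1 < n), Δ ≤ E ⟨i + 1, hi⟩ - E ⟨i, Nat.lt_of_succ_lt hi⟩)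
    (i : Fin n) : ∑ k, ((E i - E k) ^ 2)⁻¹ ≤ π ^ 2 / (3 * Δ ^ 2) := by
  have hsum : HasSum (fun m : ℤ => ((Δ * m) ^ 2)⁻¹) (π ^ 2 / (3 * Δ ^ 2)) := by
    rw [show π ^ 2 / (3 * Δ ^ 2) = (Δ ^ 2)⁻¹ * (π ^ 2 / 3) by field_simp]
    simpa only [mul_pow, mul_inv] using hasSum_int_inv_sq.mul_left (Δ ^ 2)⁻¹
  refine hasSum_le_inj (fun k : Fin n => (i : ℤ) - k) (fun a b hab => ?_)
    (fun _ _ => by positivity) (fun k => ?_) (hasSum_fintype _) hsum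
  · exact Fin.ext (by simpa using hab)
  obtain rfl | hk := eq_or_ne i k
  · simp
  have hik : (i : ℝ) - k ≠ 0 := sub_ne_zero.2 (by exact_mod_cast Fin.val_ne_of_ne hk)
  push_cast
  refine inv_anti₀ (by positivity) (sq_le_sq.2 ?_)
  rw [abs_mul, abs_of_pos hΔ]
  exact mul_abs_sub_le_abs_sub_of_gap hE i k

theorem stmt_4_general (n : ℕ) (Δ : ℝ) (hΔ : 0 < Δ) (E : Fin n → ℝ)
    (hE : ∀ (i : ℕ) (hi : i + 1 < n), Δ ≤ E ⟨i + 1, hi⟩ - E ⟨i, Nat.lt_of_succ_lt hi⟩)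
    (X : Matrix (Fin n) (Fin n) ℂ) :
    ‖Matrix.toEuclideanCLM (𝕜 := ℂ)
        (Matrix.of fun i j => if i = j then 0 else X i j / ((E i : ℂ) - (E j : ℂ)))‖ ≤
      Real.pi / (Real.sqrt 3 * Δ) * ‖Matrix.toEuclideanCLM (𝕜 := ℂ) X‖ := by
  have hL : (Matrix.of fun i j => if i = j then 0 else X i j / ((E i : ℂ) - (E j : ℂ))) =
      (Matrix.of fun i j => ((E i : ℂ) - E j)⁻¹) ⊙ X := by
    ext i j
    -- on the diagonal both sides are `0`, the right one because `0⁻¹ = 0`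
    by_cases hij : i = j <;> simp [hij, div_eq_inv_mul]
  rw [hL]
  refine norm_toEuclideanCLM_hadamard_le _ X (by positivity) fun i => ?_
  calc ∑ j, ‖((E i : ℂ) - E j)⁻¹‖ ^ 2 = ∑ j, ((E i - E j) ^ 2)⁻¹ := by
        simp only [← Complex.ofReal_sub, norm_inv, Complex.norm_real, Real.norm_eq_abs, inv_pow,
          sq_abs]
    _ ≤ π ^ 2 / (3 * Δ ^ 2) := sum_inv_sq_sub_le_of_gap hΔ hE i
    _ = (π / (√3 * Δ)) ^ 2 := by rw [div_pow, mul_pow, sq_sqrt zero_le_three]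

/-- Let `n ≥ 1`, `Δ > 0`, and `E : Fin n → ℝ` with adjacent gaps at least
`Δ`. For a complex `n × n` matrix `X`, let `L(X)` have entries `X i j / (E i - E j)` off the
diagonal and `0` on the diagonal.  Then the operator norm (induced by the Euclidean norm)
satisfies `‖L(X)‖ ≤ (π/(√3·Δ))·‖X‖`. -/
theorem stmt_4 (n : ℕ) (hn : 1 ≤ n) (Δ : ℝ) (hΔ : 0 < Δ) (E : Fin n → ℝ)
    (hE : ∀ (i : ℕ) (hi : i + 1 < n), Δ ≤ E ⟨i + 1, hi⟩ - E ⟨i, Nat.lt_of_succ_lt hi⟩)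
    (X : Matrix (Fin n) (Fin n) ℂ) :
    ‖Matrix.toEuclideanCLM (𝕜 := ℂ)
        (Matrix.of fun i j => if i = j then 0 else X i j / ((E i : ℂ) - (E j : ℂ)))‖ ≤
      Real.pi / (Real.sqrt 3 * Δ) * ‖Matrix.toEuclideanCLM (𝕜 := ℂ) X‖ :=
  stmt_4_general n Δ hΔ E hE X
end

section
/- For every integer d ≥ 1 and all real numbers μ > 0 and β > d+1, there exists a constant K > 0 such that for all x, y ∈ ℤ^d, ∑_{z ∈ ℤ^d} f(x,z)·f(z,y) ≤ K·f(x,y), where f(u,v) = exp(−μ·‖u−v‖₁)·(1+‖u−v‖₁)^{−β}; in particular the sum on the left-hand side converges. That is, f is a reproducing function on ℤ^d. -/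
/-!
Write `N` for the ℓ¹ length on `ℤ^d`, so that `N (x - y) ≤ N (x - z) + N (z - y)`. The
exponential factor `exp (-μ N)` is then submultiplicative. For the polynomial factor, one of
`n = N (x - z)` and `m = N (z - y)` is at least `N (x - y) / 2`, whence
`(1 + n)^{-β} (1 + m)^{-β} ≤ 2^β (1 + N (x - y))^{-β} ((1 + n)^{-β} + (1 + m)^{-β})`.
Summing over `z` leaves twice `∑_z (1 + N z)^{-β}`, which is finite as soon as `β > d`:
since `∏ (1 + |z_i|) ≤ (1 + N z)^d`, it is dominated by the `d`-th power of the
one-dimensional series `∑_k (1 + |k|)^{-β/d}`.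
-/

open Real Finset

noncomputable def expPolyWeight (μ β r : ℝ) : ℝ := exp (-μ * r) * (1 + r) ^ (-β)

lemma expPolyWeight_nonneg (μ β : ℝ) {r : ℝ} (hr : 0 ≤ r) : 0 ≤ expPolyWeight μ β r := by
  unfold expPolyWeight; positivity

lemma one_add_rpow_neg_mul_le {β n m N : ℝ} (hβ : 0 ≤ β) (hn : 0 ≤ n) (hm : 0 ≤ m)
    (hN : 0 ≤ N) (htri : N ≤ n + m) :
    (1 + n) ^ (-β) * (1 + m) ^ (-β) ≤
      2 ^ β * (1 + N) ^ (-β) * ((1 + n) ^ (-β) + (1 + m) ^ (-β)) := by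
  wlog hnm : n ≤ m generalizing n m
  · have := this hm hn (by linarith) (by linarith)
    rwa [mul_comm ((1 + n) ^ (-β)), add_comm ((1 + n) ^ (-β))]
  have hhalf : ((1 + N) / 2) ^ (-β) = 2 ^ β * (1 + N) ^ (-β) := by
    rw [div_rpow (by linarith) zero_le_two, rpow_neg zero_le_two, div_inv_eq_mul, mul_comm]
  have hm_le : (1 + m) ^ (-β) ≤ 2 ^ β * (1 + N) ^ (-β) :=
    hhalf ▸ rpow_le_rpow_of_nonpos (by linarith) (by linarith) (neg_nonpos.mpr hβ)
  have hn_nonneg : 0 ≤ (1 + n) ^ (-β) := rpow_nonneg (by linarith) _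
  have hm_nonneg : 0 ≤ (1 + m) ^ (-β) := rpow_nonneg (by linarith) _
  calc (1 + n) ^ (-β) * (1 + m) ^ (-β) ≤ 2 ^ β * (1 + N) ^ (-β) * (1 + n) ^ (-β) := by
        rw [mul_comm _ ((1 + n) ^ (-β))]; gcongr
    _ ≤ 2 ^ β * (1 + N) ^ (-β) * ((1 + n) ^ (-β) + (1 + m) ^ (-β)) := by
        gcongr; exact le_add_of_nonneg_right hm_nonneg

lemma expPolyWeight_mul_le {μ β n m N : ℝ} (hμ : 0 ≤ μ) (hβ : 0 ≤ β) (hn : 0 ≤ n)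
    (hm : 0 ≤ m) (hN : 0 ≤ N) (htri : N ≤ n + m) :
    expPolyWeight μ β n * expPolyWeight μ β m ≤
      2 ^ β * expPolyWeight μ β N * ((1 + n) ^ (-β) + (1 + m) ^ (-β)) := by
  have hexp : exp (-μ * n) * exp (-μ * m) ≤ exp (-μ * N) := by
    rw [← exp_add]
    exact exp_le_exp.mpr (by nlinarith)
  calc expPolyWeight μ β n * expPolyWeight μ β m
      = exp (-μ * n) * exp (-μ * m) * ((1 + n) ^ (-β) * (1 + m) ^ (-β)) := by
        unfold expPolyWeight; ring
    _ ≤ exp (-μ * N) * (2 ^ β * (1 + N) ^ (-β) * ((1 + n) ^ (-β) + (1 + m) ^ (-β))) := by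
        refine mul_le_mul hexp (one_add_rpow_neg_mul_le hβ hn hm hN htri) ?_ (exp_nonneg _)
        exact mul_nonneg (rpow_nonneg (by linarith) _) (rpow_nonneg (by linarith) _)
    _ = 2 ^ β * expPolyWeight μ β N * ((1 + n) ^ (-β) + (1 + m) ^ (-β)) := by
        unfold expPolyWeight; ring

theorem exists_tsum_expPolyWeight_mul_le {G : Type*} [AddCommGroup G] {N : G → ℝ} {μ β : ℝ}
    (hN : ∀ z, 0 ≤ N z) (htri : ∀ x y z, N (x - y) ≤ N (x - z) + N (z - y))
    (hμ : 0 ≤ μ) (hβ : 0 ≤ β) (hsum : Summable fun z => (1 + N z) ^ (-β)) :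
    ∃ K > 0, ∀ x y : G,
      Summable (fun z => expPolyWeight μ β (N (x - z)) * expPolyWeight μ β (N (z - y))) ∧
      ∑' z, expPolyWeight μ β (N (x - z)) * expPolyWeight μ β (N (z - y)) ≤
        K * expPolyWeight μ β (N (x - y)) := by
  set g : G → ℝ := fun z => (1 + N z) ^ (-β)
  have hg_pos : ∀ z, 0 < g z := fun z => rpow_pos_of_pos (by linarith [hN z]) _
  have hC : 0 < ∑' z, g z := hsum.tsum_pos (fun z => (hg_pos z).le) 0 (hg_pos 0)
  refine ⟨2 ^ β * (2 * ∑' z, g z), by positivity, fun x y => ?_⟩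
  have hbound : ∀ z, expPolyWeight μ β (N (x - z)) * expPolyWeight μ β (N (z - y)) ≤
      2 ^ β * expPolyWeight μ β (N (x - y)) * (g (x - z) + g (z - y)) := fun z =>
    expPolyWeight_mul_le hμ hβ (hN _) (hN _) (hN _) (htri x y z)
  have hmajorant : HasSum (fun z => 2 ^ β * expPolyWeight μ β (N (x - y)) *
      (g (x - z) + g (z - y))) (2 ^ β * expPolyWeight μ β (N (x - y)) *
        (∑' z, g z + ∑' z, g z)) :=
    (((Equiv.subLeft x).hasSum_iff.mpr hsum.hasSum).add
      ((Equiv.subRight y).hasSum_iff.mpr hsum.hasSum)).mul_left _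
  have hsummable : Summable fun z =>
      expPolyWeight μ β (N (x - z)) * expPolyWeight μ β (N (z - y)) :=
    hmajorant.summable.of_nonneg_of_le
      (fun z => mul_nonneg (expPolyWeight_nonneg μ β (hN _))
        (expPolyWeight_nonneg μ β (hN _))) hbound
  refine ⟨hsummable, (hasSum_le hbound hsummable.hasSum hmajorant).trans_eq ?_⟩
  ring

lemma summable_fin_pi_prod {α : Type*} {h : α → ℝ} (h_nonneg : ∀ a, 0 ≤ h a)
    (hs : Summable h) (d : ℕ) : Summable fun z : Fin d → α => ∏ i, h (z i) := by
  induction d with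
  | zero => exact .of_finite
  | succ n ih =>
    have hpair : Summable fun p : α × (Fin n → α) => h p.1 * ∏ i, h (p.2 i) := by
      apply hs.mul_of_nonneg ih
      · exact fun a => h_nonneg a
      · exact fun z => prod_nonneg fun i _ => h_nonneg _
    refine ((Fin.consEquiv fun _ => α).symm.summable_iff.mpr hpair).congr fun z => ?_
    simp [Fin.prod_univ_succ, Fin.tail]

lemma summable_one_add_abs_rpow_neg {p : ℝ} (hp : 1 < p) :
    Summable fun k : ℤ => (1 + |(k : ℝ)|) ^ (-p) := by
  have hnat : Summable fun n : ℕ => (1 + (n : ℝ)) ^ (-p) := by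
    have h := (summable_nat_add_iff 1).mpr (summable_nat_rpow.mpr (neg_lt_neg hp))
    refine h.congr fun n => ?_
    push_cast
    ring_nf
  exact .of_nat_of_neg (hnat.congr fun n => by simp) (hnat.congr fun n => by simp)

noncomputable def l1Length {d : ℕ} (z : Fin d → ℤ) : ℝ := ((∑ i, |z i| : ℤ) : ℝ)

lemma l1Length_eq {d : ℕ} (z : Fin d → ℤ) : l1Length z = ∑ i, |(z i : ℝ)| := by
  simp [l1Length]

lemma l1Length_nonneg {d : ℕ} (z : Fin d → ℤ) : 0 ≤ l1Length z := by
  rw [l1Length_eq]; positivity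

lemma l1Length_sub_le {d : ℕ} (x y z : Fin d → ℤ) :
    l1Length (x - y) ≤ l1Length (x - z) + l1Length (z - y) := by
  simp only [l1Length_eq, ← sum_add_distrib, Pi.sub_apply, Int.cast_sub]
  exact sum_le_sum fun i _ => abs_sub_le _ _ _

lemma one_add_l1Length_rpow_neg_le_prod {d : ℕ} (hd : 0 < d) {β : ℝ} (hβ : 0 ≤ β)
    (z : Fin d → ℤ) :
    (1 + l1Length z) ^ (-β) ≤ ∏ i, (1 + |(z i : ℝ)|) ^ (-(β / d)) := by
  have hfac : ∀ i, 0 < 1 + |(z i : ℝ)| := fun i => by positivity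
  have hprod_le : ∏ i, (1 + |(z i : ℝ)|) ≤ (1 + l1Length z) ^ d := by
    calc ∏ i, (1 + |(z i : ℝ)|) ≤ ∏ _i : Fin d, (1 + l1Length z) :=
          prod_le_prod (fun i _ => (hfac i).le) fun i _ => by
            rw [l1Length_eq]
            gcongr
            exact single_le_sum (f := fun j => |(z j : ℝ)|) (fun j _ => abs_nonneg _) (mem_univ i)
      _ = (1 + l1Length z) ^ d := by simp
  have hpow : (1 + l1Length z) ^ (-β) = ((1 + l1Length z) ^ d) ^ (-(β / d)) := by
    rw [← rpow_natCast, ← rpow_mul (by linarith [l1Length_nonneg z])]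
    congr 1
    field_simp
  rw [hpow, finsetProd_rpow _ _ fun i _ => (hfac i).le]
  exact rpow_le_rpow_of_nonpos (prod_pos fun i _ => hfac i) hprod_le
    (neg_nonpos.mpr (by positivity))

lemma summable_one_add_l1Length_rpow_neg {d : ℕ} {β : ℝ} (hβ : (d : ℝ) < β) :
    Summable fun z : Fin d → ℤ => (1 + l1Length z) ^ (-β) := by
  rcases Nat.eq_zero_or_pos d with rfl | hd
  · exact .of_finite
  have hd' : (0 : ℝ) < d := by exact_mod_cast hd
  refine Summable.of_nonneg_of_le (fun z => rpow_nonneg (by linarith [l1Length_nonneg z]) _)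
    (one_add_l1Length_rpow_neg_le_prod hd (by linarith))
    (summable_fin_pi_prod (fun k => rpow_nonneg (by positivity) _)
      (summable_one_add_abs_rpow_neg ((one_lt_div hd').mpr hβ)) d)

theorem stmt_5_general (d : ℕ) (μ β : ℝ) (hμ : 0 < μ) (hβ : (d : ℝ) + 1 < β)
    (f : (Fin d → ℤ) → (Fin d → ℤ) → ℝ)
    (hf : ∀ u v, f u v =
      Real.exp (-μ * ((∑ i, |u i - v i| : ℤ) : ℝ)) *
        (1 + ((∑ i, |u i - v i| : ℤ) : ℝ)) ^ (-β)) :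
    ∃ K > 0, ∀ x y : Fin d → ℤ,
      Summable (fun z : Fin d → ℤ => f x z * f z y) ∧
      (∑' z : Fin d → ℤ, f x z * f z y) ≤ K * f x y := by
  have hf' : ∀ u v, f u v = expPolyWeight μ β (l1Length (u - v)) := hf
  simp only [hf']
  exact exists_tsum_expPolyWeight_mul_le l1Length_nonneg l1Length_sub_le hμ.le
    (by linarith [(Nat.cast_nonneg d : (0 : ℝ) ≤ d)])
    (summable_one_add_l1Length_rpow_neg (by linarith))

/-- For `d ≥ 1`, `μ > 0`, `β > d+1`, the function
`f(u,v) = exp(−μ‖u−v‖₁)·(1+‖u−v‖₁)^{−β}` on `ℤ^d` is reproducing: there is `K > 0` with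
`∑_z f(x,z)·f(z,y) ≤ K·f(x,y)` for all `x, y` (and in particular the sum converges). -/
theorem stmt_5 (d : ℕ) (hd : 1 ≤ d) (μ β : ℝ) (hμ : 0 < μ) (hβ : (d : ℝ) + 1 < β)
    (f : (Fin d → ℤ) → (Fin d → ℤ) → ℝ)
    (hf : ∀ u v, f u v =
      Real.exp (-μ * ((∑ i, |u i - v i| : ℤ) : ℝ)) *
        (1 + ((∑ i, |u i - v i| : ℤ) : ℝ)) ^ (-β)) :
    ∃ K > 0, ∀ x y : Fin d → ℤ,
      Summable (fun z : Fin d → ℤ => f x z * f z y) ∧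
      (∑' z : Fin d → ℤ, f x z * f z y) ≤ K * f x y :=
  stmt_5_general d μ β hμ hβ f hf
end

section
/- (Globally non-resonant dyadic–triadic model) Let d ≥ 1 and let h be the dyadic–triadic potential on ℤ^d. Then 0 < h_n ≤ 2 for every n ∈ ℤ^d, and for every integer r_* ≥ 1, every a ∈ ℤ^d, and every function σ : ℤ^d → {−1,0,1} that vanishes outside the ball B_{r_*}(a) and is not identically zero, |∑_{n ∈ B_{r_*}(a)} σ_n·h_n| ≥ 2·3^{−2^{d−1}}·3^{−8^d·r_*^d}. (For the on-site Hamiltonian H_0 = ∑_n h_n Z_n this says: all fields are bounded by 2, and the minimal spectral gap of the restriction of H_0 to any subset of any ℓ¹-ball of radius r_*, which equals the minimum of 2·|∑ σ_n h_n| over nonzero σ ∈ {−1,0,1} supported in the subset, is at least 2·C_d·3^{−8^d·r_*^d} with C_d = 2·3^{−2^{d−1}}.) -/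
/-- `bdig k n` is the `k`-th binary digit of the integer `n` (floor division). -/
def bdig (k : ℕ) (n : ℤ) : ℤ := (n / 2 ^ k) % 2

/-- `pm d m n = (∑_{k=0}^{m-1} 2^{dk}(1 + ∑_{j=1}^d 2^{j-1} b_k(n_j))) - 1`. -/
def pm (d m : ℕ) (n : Fin d → ℤ) : ℤ :=
  (∑ k ∈ Finset.range m, 2 ^ (d * k) * (1 + ∑ j : Fin d, 2 ^ (j : ℕ) * bdig k (n j))) - 1

/-- The dyadic–triadic potential `h_n = ∑_{m=1}^∞ 3^{−p_m(n)}`. -/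
noncomputable def hpot (d : ℕ) (n : Fin d → ℤ) : ℝ :=
  ∑' m : ℕ, (3 : ℝ) ^ (-(pm d (m + 1) n))

/-!
The exponent `p_m(n) + 1` is a bijective base-`2^d` numeral of length `m`, whose `k`-th digit
`1 + ∑_j 2^{j-1} b_k(n_j)` records the `k`-th binary digits of all coordinates of `n`. Numerals
of length `m` lie strictly below those of length `m + 1`, and once `2^K > 2 r` the numerals of
length `≥ K` separate the points of a ball of radius `r`, so these exponents are pairwise distinct.

Let `n₀` maximize `p_K` on the support of `σ`. The terms with `m ≤ K` add up to `3^{-p_K(n₀)}`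
times an integer congruent to `σ_{n₀}` mod `3`, hence at least `3^{-p_K(n₀)}` in absolute value;
the terms with `m > K` have distinct exponents above `p_K(n₀)` and add up to at most half of
that. Choosing `2^{K+1} ≤ 8 r` gives `p_K(n₀) < 2^{d(K+1)} ≤ (8 r)^d`.
-/

open Finset Function

lemma bdig_nonneg (k : ℕ) (n : ℤ) : 0 ≤ bdig k n := Int.emod_nonneg _ two_ne_zero

lemma bdig_le_one (k : ℕ) (n : ℤ) : bdig k n ≤ 1 := by
  have := Int.emod_lt_of_pos (n / 2 ^ k) two_pos
  unfold bdig; omega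

lemma eq_zero_of_sum_pow_mul_eq_zero {b : ℤ} :
    ∀ {m : ℕ} {δ : Fin m → ℤ}, (∀ j, |δ j| < b) → ∑ j : Fin m, b ^ (j : ℕ) * δ j = 0 →
      ∀ j, δ j = 0
  | 0, _, _, _ => fun j => j.elim0
  | m + 1, δ, hδ, h => by
    have hb : b ≠ 0 := ((abs_nonneg _).trans_lt (hδ 0)).ne'
    have hsplit : δ 0 + b * ∑ j : Fin m, b ^ (j : ℕ) * δ j.succ = 0 := by
      rw [Fin.sum_univ_succ] at h
      simpa [mul_sum, pow_succ, mul_assoc, mul_left_comm] using h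
    have h0 : δ 0 = 0 :=
      Int.eq_zero_of_abs_lt_dvd ⟨-(∑ j : Fin m, b ^ (j : ℕ) * δ j.succ), by linarith⟩ (hδ 0)
    have hrest : ∑ j : Fin m, b ^ (j : ℕ) * δ j.succ = 0 := by
      simpa [h0, hb] using hsplit
    exact Fin.cases h0 (eq_zero_of_sum_pow_mul_eq_zero (fun j => hδ j.succ) hrest)

lemma two_pow_dvd_sub_of_bdig_eq {x y : ℤ} :
    ∀ {K : ℕ}, (∀ k < K, bdig k x = bdig k y) → 2 ^ K ∣ x - y
  | 0, _ => by simp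
  | K + 1, h => by
    obtain ⟨t, ht⟩ := two_pow_dvd_sub_of_bdig_eq (K := K) fun k hk => h k (by omega)
    have hdiv : x / 2 ^ K = y / 2 ^ K + t := by
      rw [show x = y + t * 2 ^ K by linarith [ht], Int.add_mul_ediv_right _ _ (by positivity)]
    have hK := h K (by omega)
    rw [bdig, bdig, hdiv] at hK
    obtain ⟨u, rfl⟩ : 2 ∣ t := by omega
    exact ⟨u, by rw [ht, pow_succ]; ring⟩

lemma eq_of_bdig_eq {K : ℕ} {r x y c : ℤ} (hK : 2 * r < 2 ^ K) (hx : |x - c| ≤ r)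
    (hy : |y - c| ≤ r) (h : ∀ k < K, bdig k x = bdig k y) : x = y := by
  have hxy : |x - y| < 2 ^ K := by
    calc |x - y| ≤ |x - c| + |c - y| := abs_sub_le x c y
      _ ≤ 2 * r := by rw [abs_sub_comm c y]; linarith
      _ < 2 ^ K := hK
  exact sub_eq_zero.mp (Int.eq_zero_of_abs_lt_dvd (two_pow_dvd_sub_of_bdig_eq h) hxy)

section BijectiveNumeral

variable {b : ℤ} {f : ℕ → ℤ}

lemma geom_sum_le_sum_pow_mul (hb : 0 ≤ b) (hf : ∀ k, 1 ≤ f k) (m : ℕ) :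
    ∑ k ∈ range m, b ^ k ≤ ∑ k ∈ range m, b ^ k * f k :=
  sum_le_sum fun k _ => le_mul_of_one_le_right (by positivity) (hf k)

lemma sum_pow_mul_lt_geom_sum_succ (hb : 0 ≤ b) (hf : ∀ k, f k ≤ b) (m : ℕ) :
    ∑ k ∈ range m, b ^ k * f k < ∑ k ∈ range (m + 1), b ^ k := by
  rw [geom_sum_succ, mul_sum]
  refine lt_add_of_le_of_pos (sum_le_sum fun k _ => ?_) one_pos
  rw [mul_comm b]
  exact mul_le_mul_of_nonneg_left (hf k) (by positivity)

end BijectiveNumeral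

lemma geom_sum_lt_pow {b : ℤ} (hb : 2 ≤ b) (m : ℕ) : ∑ k ∈ range m, b ^ k < b ^ m := by
  have := geom_sum_mul b m
  have : 0 ≤ ∑ k ∈ range m, b ^ k := sum_nonneg fun k _ => by positivity
  nlinarith

def blockDigit (d k : ℕ) (n : Fin d → ℤ) : ℤ := 1 + ∑ j : Fin d, 2 ^ (j : ℕ) * bdig k (n j)

def blockExp (d m : ℕ) (n : Fin d → ℤ) : ℤ := ∑ k ∈ range m, (2 ^ d) ^ k * blockDigit d k n

lemma pm_eq_blockExp_sub_one (d m : ℕ) (n : Fin d → ℤ) : pm d m n = blockExp d m n - 1 := by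
  simp only [pm, blockExp, blockDigit, pow_mul]

section BlockExp

variable {d : ℕ}

lemma one_le_blockDigit (k : ℕ) (n : Fin d → ℤ) : 1 ≤ blockDigit d k n :=
  le_add_of_nonneg_right (sum_nonneg fun j _ => mul_nonneg (by positivity) (bdig_nonneg _ _))

lemma blockDigit_le (k : ℕ) (n : Fin d → ℤ) : blockDigit d k n ≤ 2 ^ d := by
  have hbits : ∑ j : Fin d, 2 ^ (j : ℕ) * bdig k (n j) ≤ ∑ j : Fin d, (2 : ℤ) ^ (j : ℕ) :=
    sum_le_sum fun j _ => mul_le_of_le_one_right (by positivity) (bdig_le_one _ _)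
  have hgeom := geom_sum_mul (2 : ℤ) d
  rw [← Fin.sum_univ_eq_sum_range] at hgeom
  unfold blockDigit
  linarith

lemma bdig_eq_of_blockDigit_eq {k : ℕ} {n n' : Fin d → ℤ}
    (h : blockDigit d k n = blockDigit d k n') (j : Fin d) : bdig k (n j) = bdig k (n' j) := by
  have hδ : ∀ j, |bdig k (n j) - bdig k (n' j)| < 2 := fun j => by
    have := bdig_nonneg k (n j); have := bdig_le_one k (n j)
    have := bdig_nonneg k (n' j); have := bdig_le_one k (n' j)
    rw [abs_lt]; constructor <;> linarith
  have hsum : ∑ j : Fin d, 2 ^ (j : ℕ) * (bdig k (n j) - bdig k (n' j)) = 0 := by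
    simp only [mul_sub, sum_sub_distrib]
    unfold blockDigit at h
    linarith
  exact sub_eq_zero.mp (eq_zero_of_sum_pow_mul_eq_zero hδ hsum j)

lemma blockExp_lt_blockExp {m m' : ℕ} (h : m < m') (n n' : Fin d → ℤ) :
    blockExp d m n < blockExp d m' n' :=
  calc blockExp d m n < ∑ k ∈ range (m + 1), (2 ^ d : ℤ) ^ k :=
        sum_pow_mul_lt_geom_sum_succ (by positivity) (fun k => blockDigit_le k n) m
    _ ≤ ∑ k ∈ range m', (2 ^ d : ℤ) ^ k :=
        sum_le_sum_of_subset_of_nonneg (range_subset_range.mpr h) fun _ _ _ => by positivity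
    _ ≤ blockExp d m' n' :=
        geom_sum_le_sum_pow_mul (by positivity) (fun k => one_le_blockDigit k n') m'

lemma natCast_le_blockExp (n : Fin d → ℤ) : ∀ m : ℕ, (m : ℤ) ≤ blockExp d m n
  | 0 => by simp [blockExp]
  | m + 1 => by
    have := natCast_le_blockExp n m
    have := blockExp_lt_blockExp (lt_add_one m) n n
    push_cast; omega

lemma blockExp_lt_pow (hd : 1 ≤ d) (m : ℕ) (n : Fin d → ℤ) :
    blockExp d m n < (2 ^ d) ^ (m + 1) :=
  (sum_pow_mul_lt_geom_sum_succ (by positivity) (fun k => blockDigit_le k n) m).trans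
    (geom_sum_lt_pow (le_self_pow₀ one_le_two (by omega)) _)

lemma eq_of_blockExp_eq {K m m' : ℕ} {r : ℤ} {a n n' : Fin d → ℤ} (hK : 2 * r < 2 ^ K)
    (hm : K ≤ m) (hn : ∀ i, |n i - a i| ≤ r) (hn' : ∀ i, |n' i - a i| ≤ r)
    (h : blockExp d m n = blockExp d m' n') : m = m' ∧ n = n' := by
  obtain rfl : m = m' := by
    by_contra hne
    rcases Nat.lt_or_gt_of_ne hne with hlt | hlt
    · exact (blockExp_lt_blockExp hlt n n').ne h
    · exact (blockExp_lt_blockExp hlt n' n).ne' h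
  have hδ : ∀ k : Fin m, |blockDigit d k n - blockDigit d k n'| < 2 ^ d := fun k => by
    have := one_le_blockDigit k n; have := blockDigit_le k n
    have := one_le_blockDigit k n'; have := blockDigit_le k n'
    rw [abs_lt]; constructor <;> linarith
  have hsum : ∑ k : Fin m, (2 ^ d) ^ (k : ℕ) * (blockDigit d k n - blockDigit d k n') = 0 := by
    rw [Fin.sum_univ_eq_sum_range
      (fun k => (2 ^ d : ℤ) ^ k * (blockDigit d k n - blockDigit d k n'))]
    simp only [mul_sub, sum_sub_distrib]
    unfold blockExp at h
    linarith
  have hdigits := eq_zero_of_sum_pow_mul_eq_zero hδ hsum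
  refine ⟨rfl, funext fun i => eq_of_bdig_eq hK (hn i) (hn' i) fun k hk => ?_⟩
  exact bdig_eq_of_blockDigit_eq (sub_eq_zero.mp (hdigits ⟨k, by omega⟩)) i

lemma pm_lt_pm {m m' : ℕ} (h : m < m') (n n' : Fin d → ℤ) : pm d m n < pm d m' n' := by
  simpa only [pm_eq_blockExp_sub_one, sub_lt_sub_iff_right] using blockExp_lt_blockExp h n n'

lemma eq_of_pm_eq {K m m' : ℕ} {r : ℤ} {a n n' : Fin d → ℤ} (hK : 2 * r < 2 ^ K) (hm : K ≤ m)
    (hn : ∀ i, |n i - a i| ≤ r) (hn' : ∀ i, |n' i - a i| ≤ r) (h : pm d m n = pm d m' n') :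
    m = m' ∧ n = n' :=
  eq_of_blockExp_eq hK hm hn hn' (by simpa only [pm_eq_blockExp_sub_one, sub_left_inj] using h)

end BlockExp

lemma zpow_neg_pm_le (d m : ℕ) (n : Fin d → ℤ) :
    (3 : ℝ) ^ (-pm d (m + 1) n) ≤ 3⁻¹ ^ m := by
  have hm : -pm d (m + 1) n ≤ -(m : ℤ) := by
    have := natCast_le_blockExp n (m + 1)
    rw [pm_eq_blockExp_sub_one]; push_cast at this; linarith
  calc (3 : ℝ) ^ (-pm d (m + 1) n) ≤ 3 ^ (-(m : ℤ)) := zpow_le_zpow_right₀ (by norm_num) hm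
    _ = 3⁻¹ ^ m := by rw [zpow_neg, zpow_natCast, inv_pow]

lemma summable_hpot (d : ℕ) (n : Fin d → ℤ) :
    Summable fun m : ℕ => (3 : ℝ) ^ (-pm d (m + 1) n) :=
  .of_nonneg_of_le (fun _ => by positivity) (zpow_neg_pm_le d · n)
    (summable_geometric_of_lt_one (by norm_num) (by norm_num))

lemma hpot_pos (d : ℕ) (n : Fin d → ℤ) : 0 < hpot d n :=
  (summable_hpot d n).tsum_pos (fun _ => by positivity) 0 (by positivity)

lemma hpot_le_two (d : ℕ) (n : Fin d → ℤ) : hpot d n ≤ 2 := by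
  have h := (summable_hpot d n).tsum_le_tsum (zpow_neg_pm_le d · n)
    (summable_geometric_of_lt_one (by norm_num) (by norm_num))
  rw [tsum_geometric_of_lt_one (by norm_num) (by norm_num)] at h
  norm_num [hpot] at h ⊢
  linarith

lemma zpow_le_abs_sum_mul_zpow {ι : Type*} {b : ℕ} (hb : 0 < b) {S : Finset ι} {i₀ : ι}
    (hi₀ : i₀ ∈ S) {c : ι → ℤ} (hc : ¬ (b : ℤ) ∣ c i₀) {e : ι → ℤ}
    (he : ∀ i ∈ S, i ≠ i₀ → e i < e i₀) :
    (b : ℝ) ^ (-e i₀) ≤ |∑ i ∈ S, c i * (b : ℝ) ^ (-e i)| := by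
  classical
  set T : ℤ := ∑ i ∈ S, c i * (b : ℤ) ^ (e i₀ - e i).toNat with hT_def
  have hsum : ∑ i ∈ S, c i * (b : ℝ) ^ (-e i) = (b : ℝ) ^ (-e i₀) * T := by
    push_cast [T, mul_sum]
    refine sum_congr rfl fun i hi => ?_
    have hle : e i ≤ e i₀ := by
      rcases eq_or_ne i i₀ with rfl | hne
      · exact le_rfl
      · exact (he i hi hne).le
    rw [← zpow_natCast, Int.toNat_of_nonneg (by omega), mul_left_comm,
      ← zpow_add₀ (by positivity)]
    ring_nf
  have hT : T ≠ 0 := by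
    intro hT0
    have hdvd : (b : ℤ) ∣ ∑ i ∈ S.erase i₀, c i * (b : ℤ) ^ (e i₀ - e i).toNat := by
      refine dvd_sum fun i hi => (dvd_pow_self _ ?_).mul_left _
      have := he i (mem_of_mem_erase hi) (ne_of_mem_erase hi)
      omega
    rw [hT_def, ← add_sum_erase S _ hi₀, sub_self, Int.toNat_zero, pow_zero, mul_one] at hT0
    exact hc ((dvd_add_left hdvd).mp (hT0 ▸ dvd_zero _))
  rw [hsum, abs_mul, abs_of_pos (by positivity)]
  exact le_mul_of_one_le_right (by positivity) (by exact_mod_cast Int.one_le_abs hT)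

lemma summable_and_abs_tsum_mul_zpow_le {ι : Type*} {b : ℝ} (hb : 1 < b) {e : ι → ℤ}
    (he : Injective e) {q : ℤ} (hq : ∀ i, q < e i) {c : ι → ℝ} (hc : ∀ i, |c i| ≤ 1) :
    Summable (fun i => c i * b ^ (-e i)) ∧ |∑' i, c i * b ^ (-e i)| ≤ b ^ (-q) / (b - 1) := by
  set u : ι → ℕ := fun i => (e i - (q + 1)).toNat
  have hu : ∀ i, e i = q + 1 + u i := fun i => by have := hq i; simp only [u]; omega
  have hu_inj : Injective u := fun i j hij => he (by rw [hu i, hu j, hij])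
  set g : ℕ → ℝ := fun k => b ^ (-(q + 1)) * b⁻¹ ^ k
  have hb' : b⁻¹ < 1 := inv_lt_one_of_one_lt₀ hb
  have hg : HasSum g (b ^ (-q) / (b - 1)) := by
    have hsum : b ^ (-q) / (b - 1) = b ^ (-(q + 1)) * (1 - b⁻¹)⁻¹ := by
      rw [neg_add, zpow_add₀ (by positivity), zpow_neg_one]
      field_simp
    rw [hsum]
    exact (hasSum_geometric_of_lt_one (by positivity) hb').mul_left _
  have hbound : ∀ i, ‖c i * b ^ (-e i)‖ ≤ g (u i) := fun i => by
    rw [norm_mul, Real.norm_eq_abs, Real.norm_of_nonneg (by positivity), hu i, neg_add,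
      zpow_add₀ (by positivity), zpow_neg b (u i : ℤ), zpow_natCast, ← inv_pow]
    exact mul_le_of_le_one_left (by positivity) (hc i)
  have hgu : Summable (g ∘ u) := hg.summable.comp_injective hu_inj
  refine ⟨.of_norm_bounded hgu hbound, ?_⟩
  calc |∑' i, c i * b ^ (-e i)| ≤ ∑' i, g (u i) := tsum_of_norm_bounded hgu.hasSum hbound
    _ ≤ ∑' k, g k := tsum_comp_le_tsum_of_inj hg.summable (fun _ => by positivity) hu_inj
    _ = b ^ (-q) / (b - 1) := hg.tsum_eq

lemma sum_mul_tsum_eq_sum_add_tsum {α : Type*} (F : Finset α) (c : α → ℝ) {f : α → ℕ → ℝ}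
    (hf : ∀ n, Summable (f n)) (K : ℕ)
    (htail : Summable fun p : F × ℕ => c p.1 * f p.1 (p.2 + K)) :
    ∑ n ∈ F, c n * ∑' m, f n m =
      ∑ p ∈ F ×ˢ range K, c p.1 * f p.1 p.2 + ∑' p : F × ℕ, c p.1 * f p.1 (p.2 + K) := by
  rw [htail.tsum_prod, tsum_fintype, sum_coe_sort F fun n => ∑' m, c n * f n (m + K),
    sum_product, ← sum_add_distrib]
  refine sum_congr rfl fun n _ => ?_
  rw [← (hf n).sum_add_tsum_nat_add K, mul_add, mul_sum, tsum_mul_left]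

lemma exists_le_abs_sum_mul_hpot {d K : ℕ} {r : ℤ} (hK : 2 * r < 2 ^ (K + 1))
    {a : Fin d → ℤ} {F : Finset (Fin d → ℤ)} (hF : F.Nonempty)
    (hFa : ∀ n ∈ F, ∀ i, |n i - a i| ≤ r)
    {σ : (Fin d → ℤ) → ℤ} (hσ : ∀ n ∈ F, |σ n| = 1) :
    ∃ n₀ ∈ F, (3 : ℝ) ^ (-pm d (K + 1) n₀) / 2 ≤ |∑ n ∈ F, σ n * hpot d n| := by
  obtain ⟨n₀, hn₀, hmax⟩ := F.exists_max_image (pm d (K + 1)) hF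
  refine ⟨n₀, hn₀, ?_⟩
  have head_lt : ∀ p ∈ F ×ˢ range (K + 1), p ≠ (n₀, K) →
      pm d (p.2 + 1) p.1 < pm d (K + 1) n₀ := by
    rintro ⟨n, m⟩ hp hne
    obtain ⟨hn, hm⟩ := mem_product.mp hp
    rcases Nat.lt_or_ge m K with hlt | hge
    · exact pm_lt_pm (Nat.succ_lt_succ hlt) n n₀
    · obtain rfl : m = K := by rw [mem_range] at hm; omega
      refine lt_of_le_of_ne (hmax n hn) fun h => hne ?_
      rw [(eq_of_pm_eq hK le_rfl (hFa n hn) (hFa n₀ hn₀) h).2]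
  have tail_inj : Injective fun p : F × ℕ => pm d (p.2 + (K + 1) + 1) p.1 := by
    rintro ⟨n, m⟩ ⟨n', m'⟩ h
    obtain ⟨hm, hn⟩ := eq_of_pm_eq hK (by omega) (hFa n n.2) (hFa n' n'.2) h
    simp only [Prod.mk.injEq]
    exact ⟨Subtype.ext hn, by omega⟩
  have tail_gt : ∀ p : F × ℕ, pm d (K + 1) n₀ < pm d (p.2 + (K + 1) + 1) p.1 :=
    fun p => pm_lt_pm (by omega) n₀ p.1
  have hσ₀ : ¬ ((3 : ℕ) : ℤ) ∣ σ n₀ := by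
    rcases (abs_eq zero_le_one).mp (hσ n₀ hn₀) with h | h <;> rw [h] <;> norm_num
  have hhead := zpow_le_abs_sum_mul_zpow (by norm_num)
    (mem_product.mpr ⟨hn₀, self_mem_range_succ K⟩) (c := fun p => σ p.1) hσ₀ head_lt
  obtain ⟨htail_summable, htail⟩ := summable_and_abs_tsum_mul_zpow_le (by norm_num : (1 : ℝ) < 3)
    tail_inj tail_gt (c := fun p => (σ p.1 : ℝ)) fun p => by exact_mod_cast (hσ p.1 p.1.2).le
  have hsplit := sum_mul_tsum_eq_sum_add_tsum F (fun n => (σ n : ℝ))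
    (f := fun n m => (3 : ℝ) ^ (-pm d (m + 1) n)) (summable_hpot d) (K + 1) htail_summable
  push_cast at hhead
  rw [show (3 : ℝ) - 1 = 2 by norm_num] at htail
  simp only [hpot]
  rw [hsplit]
  refine le_trans ?_ (abs_sub_abs_le_abs_add _ _)
  linarith

lemma pm_lt_of_two_pow_le {d K r : ℕ} (hd : 1 ≤ d) (hK : 2 ^ (K + 2) ≤ 8 * r)
    (n : Fin d → ℤ) : pm d (K + 1) n < ((8 ^ d * r ^ d : ℕ) : ℤ) := by
  have hpow : ((2 ^ (K + 2)) ^ d : ℤ) ≤ ((8 ^ d * r ^ d : ℕ) : ℤ) := by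
    rw [← mul_pow]; exact_mod_cast Nat.pow_le_pow_left hK d
  have hexp : blockExp d (K + 1) n < (2 ^ (K + 2)) ^ d := by
    rw [← pow_mul, mul_comm, pow_mul]
    exact blockExp_lt_pow hd (K + 1) n
  rw [pm_eq_blockExp_sub_one]
  linarith

lemma exists_two_pow_between {r : ℕ} (hr : 1 ≤ r) :
    ∃ K, 2 * r < 2 ^ (K + 1) ∧ 2 ^ (K + 2) ≤ 8 * r := by
  refine ⟨Nat.log 2 r + 1, ?_, ?_⟩
  · have := Nat.lt_pow_succ_log_self one_lt_two r
    rw [pow_succ]; omega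
  · have := Nat.pow_log_le_self 2 (by omega : r ≠ 0)
    rw [pow_add]; omega

lemma exists_finset_support_subset_box {d : ℕ} {a : Fin d → ℤ} {r : ℤ} {σ : (Fin d → ℤ) → ℤ}
    (hsupp : ∀ n, ¬ (∑ i, |n i - a i|) ≤ r → σ n = 0) :
    ∃ F : Finset (Fin d → ℤ), (∀ n, n ∈ F ↔ σ n ≠ 0) ∧ ∀ n ∈ F, ∀ i, |n i - a i| ≤ r := by
  classical
  have hcoord : ∀ n, σ n ≠ 0 → ∀ i, |n i - a i| ≤ r := fun n hn i =>
    (single_le_sum (fun j _ => abs_nonneg (n j - a j)) (mem_univ i)).trans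
      (not_not.mp (mt (hsupp n) hn))
  refine ⟨(Fintype.piFinset fun i => Icc (a i - r) (a i + r)).filter (σ · ≠ 0),
    fun n => ⟨fun hn => (mem_filter.mp hn).2, fun hn => mem_filter.mpr ⟨?_, hn⟩⟩,
    fun n hn => hcoord n (mem_filter.mp hn).2⟩
  refine Fintype.mem_piFinset.mpr fun i => mem_Icc.mpr ?_
  have := abs_le.mp (hcoord n hn i)
  constructor <;> linarith

/-- **globally non-resonant dyadic–triadic model.** For `d ≥ 1`, the
dyadic–triadic potential satisfies `0 < h_n ≤ 2`, and for every `r_* ≥ 1`, every center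
`a ∈ ℤ^d`, and every `σ : ℤ^d → {−1,0,1}` supported in the ℓ¹-ball `B_{r_*}(a)` and not
identically zero, `|∑_n σ_n h_n| ≥ 2·3^{−2^{d−1}}·3^{−8^d r_*^d}`. -/
theorem stmt_6 (d : ℕ) (hd : 1 ≤ d) :
    (∀ n : Fin d → ℤ, 0 < hpot d n ∧ hpot d n ≤ 2) ∧
    (∀ r : ℕ, 1 ≤ r → ∀ a : Fin d → ℤ, ∀ σ : (Fin d → ℤ) → ℤ,
      (∀ n, σ n = -1 ∨ σ n = 0 ∨ σ n = 1) →
      (∀ n, ¬ ((∑ i, |n i - a i|) ≤ (r : ℤ)) → σ n = 0) →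
      (∃ n, σ n ≠ 0) →
      2 * (3 : ℝ) ^ (-(2 ^ (d - 1) : ℤ)) * (3 : ℝ) ^ (-((8 ^ d * r ^ d : ℕ) : ℤ)) ≤
        |∑' n : Fin d → ℤ, (σ n : ℝ) * hpot d n|) := by
  refine ⟨fun n => ⟨hpot_pos d n, hpot_le_two d n⟩, fun r hr a σ hσ hsupp hex => ?_⟩
  obtain ⟨F, hF, hFa⟩ := exists_finset_support_subset_box hsupp
  obtain ⟨K, hK, hK8⟩ := exists_two_pow_between hr
  have hσF : ∀ n ∈ F, |σ n| = 1 := fun n hn => by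
    have := (hF n).mp hn
    rcases hσ n with h | h | h <;> simp_all
  obtain ⟨n₀, -, hbound⟩ := exists_le_abs_sum_mul_hpot (by exact_mod_cast hK)
    (hex.imp fun n => (hF n).mpr) hFa hσF
  have hN := pm_lt_of_two_pow_le hd hK8 n₀
  rw [tsum_eq_sum fun n hn => by rw [not_ne_iff.mp (mt (hF n).mpr hn), Int.cast_zero, zero_mul]]
  calc 2 * (3 : ℝ) ^ (-(2 ^ (d - 1) : ℤ)) * 3 ^ (-((8 ^ d * r ^ d : ℕ) : ℤ))
      ≤ 2 * 3 ^ (-1 : ℤ) * 3 ^ (-((8 ^ d * r ^ d : ℕ) : ℤ)) := by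
        gcongr
        · norm_num
        · exact one_le_pow₀ (by norm_num)
    _ ≤ 3 ^ (-((8 ^ d * r ^ d : ℕ) : ℤ) + 1) / 2 := by
        rw [zpow_add_one₀ three_ne_zero]
        nlinarith [zpow_pos (three_pos (α := ℝ)) (-((8 ^ d * r ^ d : ℕ) : ℤ))]
    _ ≤ 3 ^ (-pm d (K + 1) n₀) / 2 := by
        gcongr
        · norm_num
        · omega
    _ ≤ _ := hbound
end

section
/- Fix an integer M ≥ 1. The family of functions p_m : Λ_{2^M} → ℤ indexed by integers m ≥ M+1 is jointly injective: if m, m' ≥ M+1 are integers, n, n' ∈ Λ_{2^M}, and p_m(n) = p_{m'}(n'), then m = m' and n = n'. -/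
/-!
Put `B = 2^d` and let `c_k(n) = ∑_j 2^j b_k(n_j) ∈ [0, B)` be the `d` bits of level `k` packed
into one base-`B` digit. For `n ∈ Λ_{2^M}` the digits `c_k(n)` vanish for `k ≥ M`, so
`p_m(n) + 1 = A(n) + (1 + B + ⋯ + B^{m-1})` with `A(n) = ∑_{k<M} B^k c_k(n) ∈ [0, B^M)`.
Since `m ↦ 1 + B + ⋯ + B^{m-1}` jumps by at least `B^m ≥ B^M` at each `m ≥ M`, the value
determines `m`, hence `A(n)`; uniqueness of base-`B` and then base-`2` expansions recovers
the bits of every `n_j`.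
-/

open Finset

section Digits

variable {N : ℕ}

def ofFinDigits (B : ℤ) (a : Fin N → ℤ) : ℤ := ∑ i : Fin N, B ^ (i : ℕ) * a i

variable {B : ℤ}

lemma ofFinDigits_succ (a : Fin (N + 1) → ℤ) :
    ofFinDigits B a = a 0 + B * ofFinDigits B (fun i => a i.succ) := by
  simp only [ofFinDigits, Fin.sum_univ_succ, Fin.val_zero, pow_zero, one_mul, Fin.val_succ,
    pow_succ', mul_sum, mul_assoc]

lemma ofFinDigits_nonneg {a : Fin N → ℤ} (ha : ∀ i, 0 ≤ a i ∧ a i < B) :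
    0 ≤ ofFinDigits B a :=
  sum_nonneg fun i _ => mul_nonneg (pow_nonneg ((ha i).1.trans (ha i).2.le) _) (ha i).1

lemma ofFinDigits_lt {a : Fin N → ℤ} (ha : ∀ i, 0 ≤ a i ∧ a i < B) :
    ofFinDigits B a < B ^ N := by
  induction N with
  | zero => simp [ofFinDigits]
  | succ N ih =>
    have htail := ih (a := fun i => a i.succ) fun i => ha i.succ
    rw [ofFinDigits_succ, pow_succ']
    nlinarith [ha 0]

lemma eq_of_ofFinDigits_eq {a b : Fin N → ℤ} (ha : ∀ i, 0 ≤ a i ∧ a i < B)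
    (hb : ∀ i, 0 ≤ b i ∧ b i < B) (h : ofFinDigits B a = ofFinDigits B b) : a = b := by
  induction N with
  | zero => exact funext fun i => i.elim0
  | succ N ih =>
    rw [ofFinDigits_succ, ofFinDigits_succ (a := b)] at h
    have hB : B ≠ 0 := ((ha 0).1.trans_lt (ha 0).2).ne'
    have hlow : a 0 = b 0 := by
      have := congrArg (· % B) h
      simpa [Int.emod_eq_of_lt (ha 0).1 (ha 0).2, Int.emod_eq_of_lt (hb 0).1 (hb 0).2] using this
    have htail := congrArg (· / B) h
    simp only [Int.add_mul_ediv_left _ _ hB, Int.ediv_eq_zero_of_lt (ha 0).1 (ha 0).2,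
      Int.ediv_eq_zero_of_lt (hb 0).1 (hb 0).2, zero_add] at htail
    have := ih (fun i => ha i.succ) (fun i => hb i.succ) htail
    funext i
    cases i using Fin.cases with
    | zero => exact hlow
    | succ i => exact congrFun this i

end Digits

lemma geom_sum_add_pow_le {B : ℤ} (hB : 0 ≤ B) {m m' : ℕ} (h : m < m') :
    ∑ k ∈ range m, B ^ k + B ^ m ≤ ∑ k ∈ range m', B ^ k := by
  rw [← sum_range_succ]
  exact sum_le_sum_of_subset_of_nonneg (range_subset_range.mpr h) fun k _ _ => pow_nonneg hB k

lemma eq_of_add_geom_sum_eq {B x y : ℤ} (hB : 1 ≤ B) {M m m' : ℕ} (hx : 0 ≤ x ∧ x < B ^ M)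
    (hy : 0 ≤ y ∧ y < B ^ M) (hm : M ≤ m) (hm' : M ≤ m')
    (h : x + ∑ k ∈ range m, B ^ k = y + ∑ k ∈ range m', B ^ k) : m = m' := by
  rcases lt_trichotomy m m' with hlt | heq | hgt
  · have := geom_sum_add_pow_le (B := B) (by linarith) hlt
    have := pow_le_pow_right₀ hB hm
    linarith
  · exact heq
  · have := geom_sum_add_pow_le (B := B) (by linarith) hgt
    have := pow_le_pow_right₀ hB hm'
    linarith

lemma bdig_nonneg_lt (k : ℕ) (n : ℤ) : 0 ≤ bdig k n ∧ bdig k n < 2 :=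
  ⟨Int.emod_nonneg _ two_ne_zero, Int.emod_lt_of_pos _ two_pos⟩

lemma bdig_zero (n : ℤ) : bdig 0 n = n % 2 := by
  simp [bdig]

lemma bdig_succ (k : ℕ) (n : ℤ) : bdig (k + 1) n = bdig k (n / 2) := by
  rw [bdig, bdig, Int.ediv_ediv_of_nonneg zero_le_two, pow_succ']

lemma bdig_eq_zero_of_lt_two_pow {M k : ℕ} (hk : M ≤ k) {n : ℤ} (hn : 0 ≤ n ∧ n < 2 ^ M) :
    bdig k n = 0 := by
  have : n < 2 ^ k := hn.2.trans_le (pow_le_pow_right₀ one_le_two hk)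
  rw [bdig, Int.ediv_eq_zero_of_lt hn.1 this, Int.zero_emod]

lemma eq_of_bdig_eq_s9 {M : ℕ} {n n' : ℤ} (hn : 0 ≤ n ∧ n < 2 ^ M)
    (hn' : 0 ≤ n' ∧ n' < 2 ^ M) (h : ∀ k < M, bdig k n = bdig k n') : n = n' := by
  induction M generalizing n n' with
  | zero => simp only [pow_zero] at hn hn'; omega
  | succ M ih =>
    have half_mem {x : ℤ} (hx : 0 ≤ x ∧ x < 2 ^ (M + 1)) : 0 ≤ x / 2 ∧ x / 2 < 2 ^ M :=
      ⟨Int.ediv_nonneg hx.1 zero_le_two, by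
        rw [Int.ediv_lt_iff_lt_mul two_pos, ← pow_succ]; exact hx.2⟩
    have hhalf : n / 2 = n' / 2 :=
      ih (half_mem hn) (half_mem hn') fun k hk => by
        rw [← bdig_succ, ← bdig_succ]; exact h (k + 1) (by omega)
    have hlow := h 0 (by omega)
    rw [bdig_zero, bdig_zero] at hlow
    omega

def packedDigit (d k : ℕ) (n : Fin d → ℤ) : ℤ := ofFinDigits 2 fun j => bdig k (n j)

lemma packedDigit_nonneg_lt (d k : ℕ) (n : Fin d → ℤ) :
    0 ≤ packedDigit d k n ∧ packedDigit d k n < 2 ^ d :=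
  ⟨ofFinDigits_nonneg fun j => bdig_nonneg_lt k (n j),
    ofFinDigits_lt fun j => bdig_nonneg_lt k (n j)⟩

lemma pm_add_one_eq {d M m : ℕ} (hm : M ≤ m) {n : Fin d → ℤ}
    (hn : ∀ j, 0 ≤ n j ∧ n j < 2 ^ M) :
    pm d m n + 1 = ofFinDigits (2 ^ d) (fun k : Fin M => packedDigit d k n) +
      ∑ k ∈ range m, ((2 : ℤ) ^ d) ^ k := by
  have htop : ∀ k ∈ range m, k ∉ range M → ((2 : ℤ) ^ d) ^ k * packedDigit d k n = 0 := by
    intro k _ hk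
    have hk : M ≤ k := by simpa using hk
    simp [packedDigit, ofFinDigits, bdig_eq_zero_of_lt_two_pow hk (hn _)]
  rw [ofFinDigits, Fin.sum_univ_eq_sum_range (fun k => ((2 : ℤ) ^ d) ^ k * packedDigit d k n),
    sum_subset (range_subset_range.mpr hm) htop, ← sum_add_distrib, pm, sub_add_cancel]
  refine sum_congr rfl fun k _ => ?_
  rw [packedDigit, ofFinDigits, pow_mul]
  ring

theorem stmt_9_general (d : ℕ) (M : ℕ)
    (m m' : ℕ) (hm : M + 1 ≤ m) (hm' : M + 1 ≤ m')
    (n n' : Fin d → ℤ)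
    (hn : ∀ j, 0 ≤ n j ∧ n j < 2 ^ M) (hn' : ∀ j, 0 ≤ n' j ∧ n' j < 2 ^ M)
    (h : pm d m n = pm d m' n') : m = m' ∧ n = n' := by
  have hdigits (x : Fin d → ℤ) (k : Fin M) := packedDigit_nonneg_lt d k x
  have hsum := congrArg (· + 1) h
  simp only [pm_add_one_eq (by omega : M ≤ m) hn, pm_add_one_eq (by omega : M ≤ m') hn'] at hsum
  have hmm : m = m' := eq_of_add_geom_sum_eq (one_le_pow₀ one_le_two)
    ⟨ofFinDigits_nonneg (hdigits n), ofFinDigits_lt (hdigits n)⟩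
    ⟨ofFinDigits_nonneg (hdigits n'), ofFinDigits_lt (hdigits n')⟩ (by omega) (by omega) hsum
  subst hmm
  have hpacked := eq_of_ofFinDigits_eq (hdigits n) (hdigits n') (add_right_cancel hsum)
  refine ⟨rfl, funext fun j => eq_of_bdig_eq_s9 (hn j) (hn' j) fun k hk => ?_⟩
  have hbits := eq_of_ofFinDigits_eq (fun j => bdig_nonneg_lt k (n j))
    (fun j => bdig_nonneg_lt k (n' j)) (congrFun hpacked ⟨k, hk⟩)
  exact congrFun hbits j

/-- For `M ≥ 1`, the family `p_m : Λ_{2^M} → ℤ` indexed by `m ≥ M+1`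
is jointly injective. -/
theorem stmt_9 (d : ℕ) (hd : 1 ≤ d) (M : ℕ) (hM : 1 ≤ M)
    (m m' : ℕ) (hm : M + 1 ≤ m) (hm' : M + 1 ≤ m')
    (n n' : Fin d → ℤ)
    (hn : ∀ j, 0 ≤ n j ∧ n j < 2 ^ M) (hn' : ∀ j, 0 ≤ n' j ∧ n' j < 2 ^ M)
    (h : pm d m n = pm d m' n') : m = m' ∧ n = n' :=
  stmt_9_general d M m m' hm hm' n n' hn hn' h
end

section
/- For every integer M ≥ 1, the tail of the dyadic–triadic potential summed over the box Λ_{2^M} satisfies ∑_{n ∈ Λ_{2^M}} ∑_{m=M+1}^∞ 3^{−p_m(n)} ≤ (3/2)·3^{−(2^{d(M+1)}−2^d)/(2^d−1)}. (The exponent (2^{d(M+1)}−2^d)/(2^d−1) = 2^d·(2^{dM}−1)/(2^d−1) is a non-negative integer.) -/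
/-!
On the box `Λ_{2^M}` the digits `b_k(n_j)` vanish for `k ≥ M`, so for `m ≥ M + 1`
`p_m(n) = E + D_m + ρ(n)`, where `E + 1 = ∑_{k ≤ M} 2^{dk}`, `D_m ≥ (m - M - 1)·2^{dM}` collects
the remaining powers, and `ρ(n)` is the number whose binary digits interleave those of
`n_1, …, n_d`. The map `ρ` is a bijection from the box onto `[0, 2^{dM})`, so with `x = 1/3`
the double sum is `3^{-E} (∑_m x^{D_m}) (1 - x^{2^{dM}}) / (1 - x) ≤ 3^{-E} / (1 - x)`.
-/

open Finset

def bitInterleave (d M : ℕ) : (Fin d → Fin (2 ^ M)) ≃ Fin (2 ^ (M * d)) :=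
  (Equiv.piCongrRight fun _ => finFunctionFinEquiv.symm).trans <|
    (Equiv.piComm _).trans <| (Equiv.curry _ _ _).symm.trans <|
      (Equiv.arrowCongr finProdFinEquiv (Equiv.refl _)).trans finFunctionFinEquiv

theorem bitInterleave_val (d M : ℕ) (ν : Fin d → Fin (2 ^ M)) :
    (bitInterleave d M ν : ℕ) =
      ∑ k ∈ range M, 2 ^ (d * k) * ∑ j : Fin d, 2 ^ (j : ℕ) * ((ν j : ℕ) / 2 ^ k % 2) := by
  rw [bitInterleave, Equiv.trans_apply, Equiv.trans_apply, Equiv.trans_apply, Equiv.trans_apply,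
    finFunctionFinEquiv_apply, ← finProdFinEquiv.sum_comp, Fintype.sum_prod_type,
    ← Fin.sum_univ_eq_sum_range (fun k => 2 ^ (d * k) * _)]
  refine sum_congr rfl fun k _ => ?_
  rw [mul_sum]
  refine sum_congr rfl fun j _ => ?_
  simp only [Equiv.arrowCongr_apply, Equiv.refl_apply, Function.comp_apply, Equiv.symm_apply_apply,
    Equiv.curry_symm_apply, Function.uncurry_apply_pair, Equiv.piComm_apply, Function.swap,
    Equiv.piCongrRight_apply, Pi.map_apply, finFunctionFinEquiv_symm_apply_val,
    finProdFinEquiv_apply_val]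
  ring

theorem pm_natCast_eq (d : ℕ) {M m : ℕ} (hm : M ≤ m) (ν : Fin d → Fin (2 ^ M)) :
    pm d m (fun j => ((ν j : ℕ) : ℤ)) =
      ∑ k ∈ range m, (2 : ℤ) ^ (d * k) - 1 + bitInterleave d M ν := by
  obtain ⟨t, rfl⟩ := Nat.exists_eq_add_of_le hm
  have high_bits_zero (k : ℕ) (j : Fin d) : ((ν j : ℕ) : ℤ) / 2 ^ (M + k) = 0 :=
    Int.ediv_eq_zero_of_lt (by positivity) <| by
      exact_mod_cast (ν j).2.trans_le (Nat.pow_le_pow_right two_pos (by omega))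
  simp only [pm, bdig, mul_add, mul_one, sum_add_distrib, bitInterleave_val]
  rw [sum_range_add (fun k => (2 : ℤ) ^ (d * k) * ∑ j : Fin d, _) M t]
  simp only [high_bits_zero, EuclideanDomain.zero_mod, mul_zero, sum_const_zero, add_zero,
    Nat.cast_sum, Nat.cast_mul, Nat.cast_pow, Nat.cast_ofNat, Int.natCast_emod, Int.natCast_ediv]
  ring

theorem sum_piFinset_Ico_eq_sum_fin {β : Type*} [AddCommMonoid β] (d L : ℕ)
    (f : (Fin d → ℤ) → β) :
    ∑ n ∈ Fintype.piFinset (fun _ : Fin d => Ico (0 : ℤ) L), f n =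
      ∑ ν : Fin d → Fin L, f (fun j => ((ν j : ℕ) : ℤ)) := by
  symm
  refine sum_nbij (fun ν j => ((ν j : ℕ) : ℤ)) (fun ν _ => by simp [Fintype.mem_piFinset])
    (fun ν _ ν' _ h => funext fun j => Fin.ext (by simpa using congrFun h j))
    (fun n hn => ?_) (fun _ _ => rfl)
  rw [Fintype.coe_piFinset] at hn
  have hn (j : Fin d) : 0 ≤ n j ∧ n j < L := by simpa using hn j (Set.mem_univ _)
  exact ⟨fun j => ⟨(n j).toNat, by have := hn j; omega⟩, by simp,
    funext fun j => Int.toNat_of_nonneg (hn j).1⟩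

theorem pow_succ_sub_self_div_add_one {b : ℕ} (hb : 2 ≤ b) (M : ℕ) :
    (b ^ (M + 1) - b) / (b - 1) + 1 = ∑ k ∈ range (M + 1), b ^ k := by
  have hle : b ≤ b ^ (M + 1) := Nat.le_self_pow M.succ_ne_zero b
  rw [Nat.geomSum_eq hb, ← Nat.add_div_right _ (by omega : 0 < b - 1)]
  congr 1
  omega

theorem tsum_pow_mul_geom_sum_le {x : ℝ} (hx0 : 0 ≤ x) (hx1 : x < 1) {N : ℕ} {D : ℕ → ℕ}
    (hD : ∀ k, N * k ≤ D k) :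
    (∑' k, x ^ D k) * ∑ r ∈ range N, x ^ r ≤ (1 - x)⁻¹ := by
  rcases N.eq_zero_or_pos with rfl | hN
  · simp only [range_zero, sum_empty, mul_zero]
    exact inv_nonneg.2 (by linarith)
  have hxN : x ^ N < 1 := pow_lt_one₀ hx0 hx1 hN.ne'
  have hgeom := summable_geometric_of_lt_one (by positivity) hxN
  have hdom (k : ℕ) : x ^ D k ≤ (x ^ N) ^ k := by
    rw [← pow_mul]
    exact pow_le_pow_of_le_one hx0 hx1.le (hD k)
  have htsum : ∑' k, x ^ D k ≤ (1 - x ^ N)⁻¹ := by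
    rw [← tsum_geometric_of_lt_one (by positivity) hxN]
    exact (hgeom.of_nonneg_of_le (fun k => by positivity) hdom).tsum_le_tsum hdom hgeom
  calc (∑' k, x ^ D k) * ∑ r ∈ range N, x ^ r
      ≤ (1 - x ^ N)⁻¹ * ∑ r ∈ range N, x ^ r :=
        mul_le_mul_of_nonneg_right htsum (sum_nonneg fun r _ => by positivity)
    _ = (1 - x)⁻¹ := by
        rw [geom_sum_eq hx1.ne, div_eq_mul_inv, ← neg_sub 1 x, ← neg_sub 1 (x ^ N), inv_neg,
          neg_mul_neg, ← mul_assoc, inv_mul_cancel₀ (by linarith), one_mul]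

theorem pm_natCast_succ_add_eq {d : ℕ} (hd : 1 ≤ d) (M k : ℕ) (ν : Fin d → Fin (2 ^ M)) :
    pm d (M + 1 + k) (fun j => ((ν j : ℕ) : ℤ)) =
      (((2 ^ (d * (M + 1)) - 2 ^ d) / (2 ^ d - 1) +
        (∑ t ∈ range k, 2 ^ (d * (M + 1 + t)) + bitInterleave d M ν) : ℕ) : ℤ) := by
  have hE : (((2 ^ (d * (M + 1)) - 2 ^ d) / (2 ^ d - 1) : ℕ) : ℤ) + 1 =
      ∑ t ∈ range (M + 1), (2 : ℤ) ^ (d * t) := by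
    have := pow_succ_sub_self_div_add_one (Nat.le_self_pow (by omega : d ≠ 0) 2) M
    simp_rw [← pow_mul] at this
    exact_mod_cast this
  rw [pm_natCast_eq d (by omega) ν, sum_range_add, ← hE]
  push_cast
  ring

theorem stmt_11_general (d : ℕ) (hd : 1 ≤ d) (M : ℕ) :
    ∑ n ∈ Fintype.piFinset (fun _ : Fin d => Finset.Ico (0 : ℤ) (2 ^ M)),
        ∑' k : ℕ, (3 : ℝ) ^ (-(pm d (M + 1 + k) n)) ≤
      (3 / 2) * (3 : ℝ) ^ (-(((2 ^ (d * (M + 1)) - 2 ^ d) / (2 ^ d - 1) : ℕ) : ℤ)) := by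
  have hpm := pm_natCast_succ_add_eq hd M
  set E := (2 ^ (d * (M + 1)) - 2 ^ d) / (2 ^ d - 1)
  set D : ℕ → ℕ := fun k => ∑ t ∈ range k, 2 ^ (d * (M + 1 + t))
  have hD (k : ℕ) : 2 ^ (M * d) * k ≤ D k := by
    simpa [mul_comm] using card_nsmul_le_sum (range k) _ (2 ^ (d * M))
      fun t _ => Nat.pow_le_pow_right two_pos (Nat.mul_le_mul_left d (by omega))
  have hρ : ∑ ν : Fin d → Fin (2 ^ M), (3 : ℝ)⁻¹ ^ (bitInterleave d M ν : ℕ) =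
      ∑ r ∈ range (2 ^ (M * d)), (3 : ℝ)⁻¹ ^ r := by
    rw [(bitInterleave d M).sum_comp (fun r => (3 : ℝ)⁻¹ ^ (r : ℕ)), Fin.sum_univ_eq_sum_range]
  rw [show (2 : ℤ) ^ M = ((2 ^ M : ℕ) : ℤ) by push_cast; rfl, sum_piFinset_Ico_eq_sum_fin]
  calc ∑ ν : Fin d → Fin (2 ^ M), ∑' k, (3 : ℝ) ^ (-pm d (M + 1 + k) (fun j => ((ν j : ℕ) : ℤ)))
      = 3 ^ (-(E : ℤ)) * ((∑' k, (3 : ℝ)⁻¹ ^ D k) * ∑ r ∈ range (2 ^ (M * d)), (3 : ℝ)⁻¹ ^ r) := by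
        simp_rw [hpm, zpow_neg, zpow_natCast, ← inv_pow, pow_add, ← hρ,
          mul_left_comm _ ((3 : ℝ)⁻¹ ^ ∑ t ∈ range _, _), tsum_mul_right, ← mul_sum]
        ring
    _ ≤ 3 ^ (-(E : ℤ)) * (1 - (3 : ℝ)⁻¹)⁻¹ := by
        gcongr
        exact tsum_pow_mul_geom_sum_le (by norm_num) (by norm_num) hD
    _ = 3 / 2 * 3 ^ (-(E : ℤ)) := by norm_num [mul_comm]

/-- For `M ≥ 1`, the tail of the dyadic–triadic potential summed over
the box `Λ_{2^M}` satisfies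
`∑_{n ∈ Λ_{2^M}} ∑_{m=M+1}^∞ 3^{−p_m(n)} ≤ (3/2)·3^{−(2^{d(M+1)}−2^d)/(2^d−1)}`. -/
theorem stmt_11 (d : ℕ) (hd : 1 ≤ d) (M : ℕ) (hM : 1 ≤ M) :
    ∑ n ∈ Fintype.piFinset (fun _ : Fin d => Finset.Ico (0 : ℤ) (2 ^ M)),
        ∑' k : ℕ, (3 : ℝ) ^ (-(pm d (M + 1 + k) n)) ≤
      (3 / 2) * (3 : ℝ) ^ (-(((2 ^ (d * (M + 1)) - 2 ^ d) / (2 ^ d - 1) : ℕ) : ℤ)) :=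
  stmt_11_general d hd M
end

section
/- Let n ≥ 3 be an integer, h : {0,…,n−1} → ℝ, ε ∈ ℝ, and E ∈ ℝ. For k ∈ ℝ, let H(k) be the n×n complex matrix with entries H(k)_{jj} = h_j for all j, H(k)_{j,j+1} = ε·e^{ik} and H(k)_{j+1,j} = ε·e^{−ik} for 0 ≤ j ≤ n−2, H(k)_{0,n−1} = ε·e^{−ik}, H(k)_{n−1,0} = ε·e^{ik}, and all other entries zero. Then for all k, k' ∈ ℝ, det(E·I − H(k)) − det(E·I − H(k')) = 2·ε^n·(cos(n·k') − cos(n·k)); equivalently, det(E·I − H(k)) + 2·ε^n·cos(n·k) is independent of k, so the entire k-dependence of the characteristic polynomial of the Bloch Hamiltonian lies in a single term of order ε^n. -/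
open Complex

/-- The Bloch Hamiltonian of a particle hopping with amplitude `ε` on a ring of `n` sites
with on-site potentials `h` and Bloch phase `e^{ik}` per hop. -/
noncomputable def blochH (n : ℕ) (h : Fin n → ℝ) (ε : ℝ) (k : ℝ) :
    Matrix (Fin n) (Fin n) ℂ :=
  Matrix.of fun i j =>
    if i = j then (h i : ℂ)
    else if (j : ℕ) = (i : ℕ) + 1 then (ε : ℂ) * Complex.exp (Complex.I * k)
    else if (i : ℕ) = (j : ℕ) + 1 then (ε : ℂ) * Complex.exp (-(Complex.I * k))
    else if (i : ℕ) = 0 ∧ (j : ℕ) = n - 1 then (ε : ℂ) * Complex.exp (-(Complex.I * k))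
    else if (i : ℕ) = n - 1 ∧ (j : ℕ) = 0 then (ε : ℂ) * Complex.exp (Complex.I * k)
    else 0

/-- phase exponent of entry (i,j) -/
def bphi (n : ℕ) (i j : Fin n) : ℤ :=
  if i = j then 0
  else if (j : ℕ) = (i : ℕ) + 1 then 1
  else if (i : ℕ) = (j : ℕ) + 1 then -1
  else if (i : ℕ) = 0 ∧ (j : ℕ) = n - 1 then -1
  else if (i : ℕ) = n - 1 ∧ (j : ℕ) = 0 then 1
  else 0

/-- k-independent coefficient of entry (i,j) of E•1 - blochH -/
noncomputable def bcoef (n : ℕ) (h : Fin n → ℝ) (ε E : ℝ) (i j : Fin n) : ℂ :=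
  if i = j then (E : ℂ) - h i
  else if (j : ℕ) = (i : ℕ) + 1 then -ε
  else if (i : ℕ) = (j : ℕ) + 1 then -ε
  else if (i : ℕ) = 0 ∧ (j : ℕ) = n - 1 then -ε
  else if (i : ℕ) = n - 1 ∧ (j : ℕ) = 0 then -ε
  else 0

lemma entry_eq (n : ℕ) (h : Fin n → ℝ) (ε E : ℝ) (k : ℝ) (i j : Fin n) :
    ((E : ℂ) • (1 : Matrix (Fin n) (Fin n) ℂ) - blochH n h ε k) i j =
      bcoef n h ε E i j * Complex.exp (Complex.I * k * (bphi n i j : ℤ)) := by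
  simp only [Matrix.sub_apply, Matrix.smul_apply, Matrix.one_apply, blochH, bcoef, bphi,
    Matrix.of_apply, smul_eq_mul]
  split_ifs <;> push_cast <;> simp [Complex.exp_zero] <;> ring_nf <;>
    simp [Complex.exp_zero] <;> ring

lemma bphi_mem (n : ℕ) (i j : Fin n) : bphi n i j = -1 ∨ bphi n i j = 0 ∨ bphi n i j = 1 := by
  unfold bphi; split_ifs <;> simp

lemma bcoef_zmod {n : ℕ} (hn : 1 ≤ n) (h : Fin n → ℝ) (ε E : ℝ) (i j : Fin n)
    (hne : bcoef n h ε E i j ≠ 0) :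
    ((i : ℕ) : ZMod n) = ((j : ℕ) : ZMod n) - (bphi n i j : ZMod n) := by
  unfold bcoef at hne
  unfold bphi
  split_ifs at hne ⊢ with h1 h2 h3 h4 h5
  · simp [h1]
  · have : ((j : ℕ) : ZMod n) = (i : ℕ) + 1 := by rw [h2]; push_cast; ring
    rw [this]; push_cast; ring
  · have : ((i : ℕ) : ZMod n) = (j : ℕ) + 1 := by rw [h3]; push_cast; ring
    rw [this]; push_cast; ring
  · obtain ⟨hi0, hjn⟩ := h4
    have hj : ((j : ℕ) : ZMod n) = (n : ZMod n) - 1 := by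
      rw [hjn]; push_cast [Nat.cast_sub hn]; ring
    rw [hi0, hj]
    simp [ZMod.natCast_self]
  · obtain ⟨hin, hj0⟩ := h5
    have hi : ((i : ℕ) : ZMod n) = (n : ZMod n) - 1 := by
      rw [hin]; push_cast [Nat.cast_sub hn]; ring
    rw [hi, hj0]
    simp [ZMod.natCast_self]
  · exact absurd rfl hne

/-- cast Fin n → ZMod n is injective -/
lemma castc_inj {n : ℕ} (hn : 1 ≤ n) {i j : Fin n}
    (hij : ((i : ℕ) : ZMod n) = ((j : ℕ) : ZMod n)) : i = j := by
  have h1 := ZMod.val_cast_of_lt i.isLt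
  have h2 := ZMod.val_cast_of_lt j.isLt
  exact Fin.ext (by rw [← h1, ← h2, hij])

lemma castc_add_one {m : ℕ} (hm : 1 ≤ m) (i : Fin (m + 1)) :
    (((i + 1 : Fin (m + 1)) : ℕ) : ZMod (m + 1)) = ((i : ℕ) : ZMod (m + 1)) + 1 := by
  have : ((i + 1 : Fin (m + 1)) : ℕ) = ((i : ℕ) + 1) % (m + 1) := by
    simp [Fin.add_def, Fin.val_one']
  rw [this, ZMod.natCast_mod]
  push_cast; ring

/-- entries along the `+1` shift (finRotate) -/
lemma shift_up {m : ℕ} (hm : 2 ≤ m) (h : Fin (m+1) → ℝ) (ε E : ℝ) (i : Fin (m+1)) :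
    bcoef (m+1) h ε E (finRotate (m+1) i) i = -ε ∧ bphi (m+1) (finRotate (m+1) i) i = -1 := by
  rw [finRotate_succ_apply]
  have hval : ((i + 1 : Fin (m + 1)) : ℕ) = ((i : ℕ) + 1) % (m + 1) := by
    simp [Fin.add_def, Fin.val_one']
  have hi := i.isLt
  unfold bcoef bphi
  rcases Nat.lt_or_ge (i : ℕ) m with hlt | hge
  · have hv : ((i + 1 : Fin (m + 1)) : ℕ) = (i : ℕ) + 1 := by
      rw [hval, Nat.mod_eq_of_lt (by omega)]
    split_ifs with h1 h2 h3 h4 h5 <;>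
      first
        | exact ⟨rfl, rfl⟩
        | (exfalso; rw [Fin.ext_iff] at * ; omega)
  · have him : (i : ℕ) = m := by omega
    have hv : ((i + 1 : Fin (m + 1)) : ℕ) = 0 := by rw [hval, him]; simp
    split_ifs with h1 h2 h3 h4 h5 <;>
      first
        | exact ⟨rfl, rfl⟩
        | (exfalso; rw [Fin.ext_iff] at *; omega)

/-- entries along the `-1` shift (finRotate⁻¹) -/
lemma shift_down {m : ℕ} (hm : 2 ≤ m) (h : Fin (m+1) → ℝ) (ε E : ℝ) (i : Fin (m+1)) :
    bcoef (m+1) h ε E ((finRotate (m+1))⁻¹ i) i = -ε ∧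
      bphi (m+1) ((finRotate (m+1))⁻¹ i) i = 1 := by
  set j := (finRotate (m+1))⁻¹ i with hj
  have hji : j + 1 = i := by
    have := Equiv.apply_symm_apply (finRotate (m+1)) i
    rw [← finRotate_succ_apply (i := j)]
    simpa [hj] using this
  have hval : (((j : ℕ) + 1) % (m + 1)) = (i : ℕ) := by
    rw [← hji]
    simp [Fin.add_def, Fin.val_one']
  have hjlt := j.isLt
  unfold bcoef bphi
  rcases Nat.lt_or_ge (j : ℕ) m with hlt | hge
  · have hv : (i : ℕ) = (j : ℕ) + 1 := by rw [← hval, Nat.mod_eq_of_lt (by omega)]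
    split_ifs with h1 h2 h3 h4 h5 <;>
      first
        | exact ⟨rfl, rfl⟩
        | (exfalso; rw [Fin.ext_iff] at *; omega)
  · have hjm : (j : ℕ) = m := by omega
    have hv : (i : ℕ) = 0 := by rw [← hval, hjm]; simp
    split_ifs with h1 h2 h3 h4 h5 <;>
      first
        | exact ⟨rfl, rfl⟩
        | (exfalso; rw [Fin.ext_iff] at *; omega)

/-- classification: nonzero-product permutations have zero total phase unless they
are one of the two rotations -/
lemma classify {m : ℕ} (hm : 2 ≤ m) (h : Fin (m+1) → ℝ) (ε E : ℝ)
    (σ : Equiv.Perm (Fin (m+1)))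
    (hne : ∀ i, bcoef (m+1) h ε E (σ i) i ≠ 0)
    (h1 : σ ≠ finRotate (m+1)) (h2 : σ ≠ (finRotate (m+1))⁻¹) :
    (∑ i, bphi (m+1) (σ i) i) = 0 := by
  have hN1 : 1 ≤ m + 1 := by omega
  have hrel : ∀ i : Fin (m+1),
      ((σ i : ℕ) : ZMod (m+1)) = ((i : ℕ) : ZMod (m+1)) - ((bphi (m+1) (σ i) i : ℤ) : ZMod (m+1)) :=
    fun i => bcoef_zmod hN1 h ε E _ _ (hne i)
  have hcast : (((∑ i, bphi (m+1) (σ i) i : ℤ)) : ZMod (m+1)) = 0 := by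
    have hsum : ∑ i : Fin (m+1), (((σ i : ℕ)) : ZMod (m+1))
        = ∑ i : Fin (m+1), ((i : ℕ) : ZMod (m+1)) :=
      Equiv.sum_comp σ (fun j : Fin (m+1) => ((j : ℕ) : ZMod (m+1)))
    rw [Finset.sum_congr rfl (fun i _ => hrel i), Finset.sum_sub_distrib] at hsum
    have h0 : ∑ i : Fin (m+1), ((bphi (m+1) (σ i) i : ℤ) : ZMod (m+1)) = 0 := by
      have := sub_eq_self.mp hsum
      linear_combination this
    push_cast
    push_cast at h0
    exact h0
  have hdvd : ((m+1 : ℕ) : ℤ) ∣ ∑ i, bphi (m+1) (σ i) i :=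
    (ZMod.intCast_zmod_eq_zero_iff_dvd _ (m+1)).mp hcast
  have hub : (∑ i, bphi (m+1) (σ i) i) ≤ (m+1 : ℕ) := by
    calc (∑ i, bphi (m+1) (σ i) i) ≤ ∑ _i : Fin (m+1), (1 : ℤ) := by
          apply Finset.sum_le_sum
          intro i _
          rcases bphi_mem (m+1) (σ i) i with h' | h' | h' <;> omega
      _ = (m+1 : ℕ) := by simp
  have hlb : -((m+1 : ℕ) : ℤ) ≤ ∑ i, bphi (m+1) (σ i) i := by
    calc -((m+1:ℕ) : ℤ) = ∑ _i : Fin (m+1), (-1 : ℤ) := by simp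
      _ ≤ ∑ i, bphi (m+1) (σ i) i := by
          apply Finset.sum_le_sum
          intro i _
          rcases bphi_mem (m+1) (σ i) i with h' | h' | h' <;> omega
  by_contra hS0
  have habs : |∑ i, bphi (m+1) (σ i) i| = ((m+1:ℕ) : ℤ) := by
    have h1' : ((m+1:ℕ) : ℤ) ≤ |∑ i, bphi (m+1) (σ i) i| :=
      Int.le_of_dvd (abs_pos.mpr hS0) ((dvd_abs _ _).mpr hdvd)
    have h2' : |∑ i, bphi (m+1) (σ i) i| ≤ ((m+1:ℕ) : ℤ) := abs_le.mpr ⟨hlb, hub⟩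
    omega
  rcases (abs_eq (by positivity : (0:ℤ) ≤ ((m+1:ℕ):ℤ))).mp habs with hSN | hSN
  · -- sum = m+1 : all φ = 1, σ = finRotate⁻¹
    have hall : ∀ i : Fin (m+1), bphi (m+1) (σ i) i = 1 := by
      have key := (Finset.sum_eq_sum_iff_of_le
        (f := fun i : Fin (m+1) => bphi (m+1) (σ i) i) (g := fun _ => (1 : ℤ))
        (fun i _ => by
          show bphi (m+1) (σ i) i ≤ 1
          rcases bphi_mem (m+1) (σ i) i with h' | h' | h' <;> omega)).mp
        (show (∑ i : Fin (m+1), bphi (m+1) (σ i) i) = ∑ _i : Fin (m+1), (1:ℤ) by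
          simpa using hSN)
      exact fun i => key i (Finset.mem_univ i)
    apply h2
    have hmul : finRotate (m+1) * σ = 1 := by
      ext i
      have hc : ((σ i : ℕ) : ZMod (m+1)) = ((i : ℕ) : ZMod (m+1)) - 1 := by
        rw [hrel i, hall i]; push_cast; ring
      have hcc : (((σ i + 1 : Fin (m+1)) : ℕ) : ZMod (m+1)) = ((i : ℕ) : ZMod (m+1)) := by
        rw [castc_add_one (by omega) (σ i), hc]; ring
      have hfix : σ i + 1 = i := castc_inj hN1 hcc
      simpa [Equiv.Perm.mul_apply, finRotate_succ_apply] using congrArg Fin.val hfix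
    exact eq_inv_of_mul_eq_one_right hmul
  · -- sum = -(m+1) : all φ = -1, σ = finRotate
    have hall : ∀ i : Fin (m+1), bphi (m+1) (σ i) i = -1 := by
      have key := (Finset.sum_eq_sum_iff_of_le
        (f := fun _ : Fin (m+1) => (-1 : ℤ)) (g := fun i => bphi (m+1) (σ i) i)
        (fun i _ => by
          show (-1 : ℤ) ≤ bphi (m+1) (σ i) i
          rcases bphi_mem (m+1) (σ i) i with h' | h' | h' <;> omega)).mp
        (show (∑ _i : Fin (m+1), (-1:ℤ)) = ∑ i : Fin (m+1), bphi (m+1) (σ i) i by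
          simp [hSN])
      exact fun i => (key i (Finset.mem_univ i)).symm
    apply h1
    ext i
    have hc : ((σ i : ℕ) : ZMod (m+1)) = ((i : ℕ) : ZMod (m+1)) + 1 := by
      rw [hrel i, hall i]; push_cast; ring
    have hcc : ((σ i : ℕ) : ZMod (m+1)) = (((i + 1 : Fin (m+1)) : ℕ) : ZMod (m+1)) := by
      rw [castc_add_one (by omega) i, hc]
    have hfix : σ i = i + 1 := castc_inj hN1 hcc
    simpa [finRotate_succ_apply] using congrArg Fin.val hfix

/-- For `n ≥ 3`, the `k`-dependence of the characteristic polynomial of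
the Bloch Hamiltonian lies in a single term of order `ε^n`:
`det(E·I − H(k)) − det(E·I − H(k')) = 2 ε^n (cos(nk') − cos(nk))`. -/
theorem stmt_19 (n : ℕ) (hn : 3 ≤ n) (h : Fin n → ℝ) (ε E : ℝ) (k k' : ℝ) :
    Matrix.det ((E : ℂ) • (1 : Matrix (Fin n) (Fin n) ℂ) - blochH n h ε k) -
        Matrix.det ((E : ℂ) • (1 : Matrix (Fin n) (Fin n) ℂ) - blochH n h ε k') =
      2 * (ε : ℂ) ^ n * ((Real.cos (n * k') : ℝ) - (Real.cos (n * k) : ℝ)) := by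
  obtain ⟨m, rfl⟩ : ∃ m, n = m + 1 := ⟨n - 1, by omega⟩
  have hm : 2 ≤ m := by omega
  -- determinant via Leibniz with coefficients and phases separated
  have hdet : ∀ κ : ℝ,
      Matrix.det ((E : ℂ) • (1 : Matrix (Fin (m+1)) (Fin (m+1)) ℂ) - blochH (m+1) h ε κ) =
      ∑ σ : Equiv.Perm (Fin (m+1)), ((Equiv.Perm.sign σ : ℤ) : ℂ) *
        ((∏ i, bcoef (m+1) h ε E (σ i) i) *
          Complex.exp (Complex.I * κ * ((∑ i, bphi (m+1) (σ i) i : ℤ) : ℂ))) := by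
    intro κ
    rw [Matrix.det_apply']
    refine Finset.sum_congr rfl fun σ _ => ?_
    congr 1
    rw [Finset.prod_congr rfl (fun i _ => entry_eq (m+1) h ε E κ (σ i) i),
        Finset.prod_mul_distrib, ← Complex.exp_sum]
    congr 1
    simp only [mul_assoc, ← Finset.mul_sum]
    norm_cast
  -- the summand difference
  rw [hdet k, hdet k', ← Finset.sum_sub_distrib]
  have hterm : ∀ σ : Equiv.Perm (Fin (m+1)),
      ((Equiv.Perm.sign σ : ℤ) : ℂ) *
        ((∏ i, bcoef (m+1) h ε E (σ i) i) *
          Complex.exp (Complex.I * k * ((∑ i, bphi (m+1) (σ i) i : ℤ) : ℂ))) -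
      ((Equiv.Perm.sign σ : ℤ) : ℂ) *
        ((∏ i, bcoef (m+1) h ε E (σ i) i) *
          Complex.exp (Complex.I * k' * ((∑ i, bphi (m+1) (σ i) i : ℤ) : ℂ))) =
      ((Equiv.Perm.sign σ : ℤ) : ℂ) *
        ((∏ i, bcoef (m+1) h ε E (σ i) i) *
          (Complex.exp (Complex.I * k * ((∑ i, bphi (m+1) (σ i) i : ℤ) : ℂ)) -
           Complex.exp (Complex.I * k' * ((∑ i, bphi (m+1) (σ i) i : ℤ) : ℂ)))) :=
    fun σ => by ring
  rw [Finset.sum_congr rfl fun σ _ => hterm σ]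
  -- only the two rotations survive
  have hnepair : finRotate (m+1) ≠ (finRotate (m+1))⁻¹ := by
    intro heq
    have h1 : finRotate (m+1) ((finRotate (m+1)) 0) = 0 := by
      nth_rewrite 2 [heq]
      simp
    rw [finRotate_succ_apply, finRotate_succ_apply] at h1
    have h2 := congrArg Fin.val h1
    have h0 : ((0 : Fin (m+1)) : ℕ) = 0 := rfl
    have e1 : 1 % (m+1) = 1 := Nat.mod_eq_of_lt (by omega)
    simp only [Fin.ext_iff, Fin.add_def, Fin.val_one', Fin.val_zero, h0, e1] at h2
    rw [Nat.mod_eq_of_lt (by omega)] at h2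
    omega
  rw [← Finset.sum_subset (Finset.subset_univ {finRotate (m+1), (finRotate (m+1))⁻¹})
      (fun σ _ hσ => by
        simp only [Finset.mem_insert, Finset.mem_singleton, not_or] at hσ
        obtain ⟨hσ1, hσ2⟩ := hσ
        by_cases hz : (∏ i, bcoef (m+1) h ε E (σ i) i) = 0
        · simp [hz]
        · have hne' : ∀ i, bcoef (m+1) h ε E (σ i) i ≠ 0 :=
            fun i => Finset.prod_ne_zero_iff.mp hz i (Finset.mem_univ i)
          rw [classify hm h ε E σ hne' hσ1 hσ2]
          simp),
    Finset.sum_pair hnepair]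
  -- compute the two surviving terms
  have hprod_up : (∏ i, bcoef (m+1) h ε E (finRotate (m+1) i) i) = (-ε : ℂ) ^ (m+1) := by
    rw [Finset.prod_congr rfl fun i _ => (shift_up hm h ε E i).1]
    simp
  have hsum_up : (∑ i, bphi (m+1) (finRotate (m+1) i) i) = -((m : ℤ) + 1) := by
    rw [Finset.sum_congr rfl fun i _ => (shift_up hm h ε E i).2]
    simp
  have hprod_down : (∏ i, bcoef (m+1) h ε E ((finRotate (m+1))⁻¹ i) i) = (-ε : ℂ) ^ (m+1) := by
    rw [Finset.prod_congr rfl fun i _ => (shift_down hm h ε E i).1]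
    simp
  have hsum_down : (∑ i, bphi (m+1) ((finRotate (m+1))⁻¹ i) i) = ((m : ℤ) + 1) := by
    rw [Finset.sum_congr rfl fun i _ => (shift_down hm h ε E i).2]
    simp
  rw [hprod_up, hsum_up, hprod_down, hsum_down, sign_finRotate, Equiv.Perm.sign_inv,
    sign_finRotate]
  -- normalize the exponents
  have earg : ∀ κ : ℝ, Complex.I * κ * ((-((m : ℤ) + 1) : ℤ) : ℂ) =
      -((((m+1 : ℕ) : ℝ) * κ : ℝ) : ℂ) * Complex.I := by
    intro κ; push_cast; ring
  have earg' : ∀ κ : ℝ, Complex.I * κ * (((m : ℤ) + 1 : ℤ) : ℂ) =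
      ((((m+1 : ℕ) : ℝ) * κ : ℝ) : ℂ) * Complex.I := by
    intro κ; push_cast; ring
  rw [earg k, earg k', earg' k, earg' k']
  -- final algebra with 2 cos x = e^{ix} + e^{-ix}
  have c1 := Complex.two_cos ((((m+1 : ℕ) : ℝ) * k : ℝ) : ℂ)
  have c2 := Complex.two_cos ((((m+1 : ℕ) : ℝ) * k' : ℝ) : ℂ)
  push_cast
  push_cast at c1 c2
  have hodd : ((-1:ℂ))^m * ((-1:ℂ))^m = 1 := by
    rw [← pow_add]
    exact Even.neg_one_pow ⟨m, by ring⟩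
  linear_combination ((ε:ℂ))^(m+1) * c1 - ((ε:ℂ))^(m+1) * c2 -
    ((ε:ℂ))^(m+1) *
      (Complex.exp (-((((m:ℕ):ℂ) + 1) * (k:ℂ)) * Complex.I) -
        Complex.exp (-((((m:ℕ):ℂ) + 1) * (k':ℂ)) * Complex.I) +
        Complex.exp (((((m:ℕ):ℂ) + 1) * (k:ℂ)) * Complex.I) -
        Complex.exp (((((m:ℕ):ℂ) + 1) * (k':ℂ)) * Complex.I)) * hodd
end
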